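/- arXiv:1806.07083 — 11 statements merged into one kernel-verified Lean document; each statement's English description precedes it below -/
import Mathlib

section
/- Let U and F be real normed vector spaces, D : U → F a linear map, p a seminorm on U, and C_WP ≥ 0 a constant such that p(u) ≤ C_WP · ‖D u‖ for all u ∈ U (well-posedness). Let U_r ⊆ U be a finite-dimensional linear subspace and let u* ∈ U with data f = D(u*). Then there exists u_r* ∈ U_r such that ‖f − D(u_r*)‖ = inf_{v ∈ U_r} ‖f − D(v)‖, and every such minimizer satisfies p(u* − u_r*) ≤ C_WP · inf_{v ∈ U_r} ‖f − D(v)‖. -/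
/-- Theorem 1 (TheConvContApp): for a well-posed linear operator equation `D u = f`
with finite-dimensional trial space `Ur`, a residual-minimizing `u_r* ∈ Ur` exists,
and every minimizer satisfies the well-posedness error bound. -/
theorem convergence_of_continuous_approximation
    {U F : Type*} [NormedAddCommGroup U] [NormedSpace ℝ U]
    [NormedAddCommGroup F] [NormedSpace ℝ F]
    (D : U →ₗ[ℝ] F) (p : Seminorm ℝ U) (C_WP : ℝ) (hC : 0 ≤ C_WP)
    (hwp : ∀ u : U, p u ≤ C_WP * ‖D u‖)
    (Ur : Submodule ℝ U) [FiniteDimensional ℝ Ur]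
    (ustar : U) (f : F) (hf : f = D ustar) :
    (∃ ur ∈ Ur, ‖f - D ur‖ = ⨅ v : Ur, ‖f - D v‖) ∧
    (∀ ur ∈ Ur, ‖f - D ur‖ = (⨅ v : Ur, ‖f - D v‖) →
      p (ustar - ur) ≤ C_WP * ⨅ v : Ur, ‖f - D v‖) := by
  -- The image of the trial space under `D`
  set W : Submodule ℝ F := Ur.map D with hWdef
  haveI : FiniteDimensional ℝ W := Module.Finite.map Ur D
  -- the residual function on the image
  set g : W → ℝ := fun w => ‖f - (w : F)‖ with hg
  have hgcont : Continuous g := by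
    apply Continuous.norm
    exact continuous_const.sub continuous_subtype_val
  -- infima agree
  have hrange : Set.range (fun v : Ur => ‖f - D v‖) = Set.range g := by
    ext x
    constructor
    · rintro ⟨v, rfl⟩
      exact ⟨⟨D v, ⟨v, v.2, rfl⟩⟩, rfl⟩
    · rintro ⟨⟨w, hw⟩, rfl⟩
      obtain ⟨v, hv, rfl⟩ := hw
      exact ⟨⟨v, hv⟩, rfl⟩
  have hiInf : (⨅ v : Ur, ‖f - D v‖) = ⨅ w : W, g w := by
    rw [iInf, iInf, hrange]
  have hbdd : BddBelow (Set.range g) := ⟨0, by rintro x ⟨w, rfl⟩; exact norm_nonneg _⟩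
  -- compactness argument in the finite-dimensional space W
  set K : Set W := {w : W | g w ≤ ‖f‖} with hK
  have hKne : K.Nonempty := ⟨0, by simp [hK, hg]⟩
  have hKclosed : IsClosed K := isClosed_le hgcont continuous_const
  have hKbdd : Bornology.IsBounded K := by
    apply Bornology.IsBounded.subset (Metric.isBounded_closedBall (x := (0 : W)) (r := 2 * ‖f‖))
    intro w hw
    have h1 : ‖(w : F)‖ ≤ ‖(w : F) - f‖ + ‖f‖ := by
      calc ‖(w : F)‖ = ‖((w : F) - f) + f‖ := by rw [sub_add_cancel]
      _ ≤ ‖(w : F) - f‖ + ‖f‖ := norm_add_le _ _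
    have h2 : ‖(w : F) - f‖ = g w := by rw [hg, norm_sub_rev]
    simp only [Metric.mem_closedBall, dist_zero_right]
    have : ‖w‖ = ‖(w : F)‖ := rfl
    rw [this]
    calc ‖(w : F)‖ ≤ g w + ‖f‖ := by rw [← h2]; exact h1
    _ ≤ ‖f‖ + ‖f‖ := by have hw' : g w ≤ ‖f‖ := hw; linarith
    _ = 2 * ‖f‖ := by ring
  have hKcompact : IsCompact K := Metric.isCompact_of_isClosed_isBounded hKclosed hKbdd
  obtain ⟨w₀, hw₀K, hmin⟩ := hKcompact.exists_isMinOn hKne (hgcont.continuousOn)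
  have hglobal : ∀ w : W, g w₀ ≤ g w := by
    intro w
    by_cases hwK : w ∈ K
    · exact hmin hwK
    · have h1 : g w₀ ≤ g 0 := hmin (by simp [hK, hg])
      have h2 : g 0 = ‖f‖ := by simp [hg]
      have h3 : ‖f‖ ≤ g w := le_of_not_ge hwK
      linarith
  have hinf_eq : g w₀ = ⨅ w : W, g w :=
    le_antisymm (le_ciInf hglobal) (ciInf_le hbdd w₀)
  obtain ⟨v₀, hv₀, hDv₀⟩ := w₀.2
  constructor
  · refine ⟨v₀, hv₀, ?_⟩
    rw [hiInf, ← hinf_eq, hg]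
    simp [hDv₀]
  · intro ur hur hmin'
    have key : p (ustar - ur) ≤ C_WP * ‖D (ustar - ur)‖ := hwp _
    have : D (ustar - ur) = f - D ur := by rw [map_sub, hf]
    rw [this] at key
    rw [hmin'] at key
    exact key
end

section
/- Let F and V be real normed vector spaces, T : F → V a linear map with ‖T(g)‖ ≤ ‖g‖ for all g ∈ F (a nonexpansive sampling map), and F_r ⊆ F a finite-dimensional linear subspace. Assume the stability inequality ‖g‖ ≤ C · ‖T(g)‖ holds for all g ∈ F_r with a constant C ≥ 0. Let f ∈ F, write η = inf_{g ∈ F_r} ‖f − g‖, and let f̃ ∈ F_r satisfy ‖T(f) − T(f̃)‖ ≤ 2 · inf_{g ∈ F_r} ‖T(f) − T(g)‖. Then ‖f − f̃‖ ≤ (1 + 3C) · η. -/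
/-- Stability-transfer estimate of Section 4: if the nonexpansive sampling map `T` is
stable on the finite-dimensional trial space `Fr` with constant `C`, then a near-best
solution of the discretized approximation problem is a quasi-best approximation in the
full norm, with factor `1 + 3C`. -/
theorem stability_transfer
    {F V : Type*} [NormedAddCommGroup F] [NormedSpace ℝ F]
    [NormedAddCommGroup V] [NormedSpace ℝ V]
    (T : F →ₗ[ℝ] V) (hT : ∀ g : F, ‖T g‖ ≤ ‖g‖)
    (Fr : Submodule ℝ F) [FiniteDimensional ℝ Fr]
    (C : ℝ) (hC : 0 ≤ C) (hstab : ∀ g ∈ Fr, ‖g‖ ≤ C * ‖T g‖)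
    (f : F) (ftilde : F) (hmem : ftilde ∈ Fr)
    (hnear : ‖T f - T ftilde‖ ≤ 2 * ⨅ g : Fr, ‖T f - T g‖) :
    ‖f - ftilde‖ ≤ (1 + 3 * C) * ⨅ g : Fr, ‖f - g‖ := by
  have hpos : (0:ℝ) < 1 + 3 * C := by linarith
  have key : ∀ g : Fr, ‖f - ftilde‖ ≤ (1 + 3 * C) * ‖f - (g:F)‖ := by
    intro g
    have hbdd : BddBelow (Set.range fun h : Fr => ‖T f - T h‖) := by
      refine ⟨0, ?_⟩
      rintro x ⟨h, rfl⟩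
      exact norm_nonneg _
    have hinf : (⨅ h : Fr, ‖T f - T h‖) ≤ ‖T f - T g‖ := ciInf_le hbdd g
    have h1 : ‖T f - T (g:F)‖ ≤ ‖f - g‖ := by
      calc ‖T f - T (g:F)‖ = ‖T (f - g)‖ := by rw [map_sub]
        _ ≤ ‖f - g‖ := hT _
    have h2 : ‖(g:F) - ftilde‖ ≤ C * ‖T (g:F) - T ftilde‖ := by
      have := hstab _ (Fr.sub_mem g.2 hmem)
      rwa [map_sub] at this
    have h3 : ‖T (g:F) - T ftilde‖ ≤ ‖T (g:F) - T f‖ + ‖T f - T ftilde‖ :=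
      norm_sub_le_norm_sub_add_norm_sub _ _ _
    have h4 : ‖T (g:F) - T f‖ = ‖T f - T (g:F)‖ := norm_sub_rev _ _
    have h5 : ‖f - ftilde‖ ≤ ‖f - g‖ + ‖(g:F) - ftilde‖ :=
      norm_sub_le_norm_sub_add_norm_sub _ _ _
    nlinarith [norm_nonneg (f - (g:F)), mul_le_mul_of_nonneg_left h3 hC,
      mul_le_mul_of_nonneg_left hinf hC]
  have hdiv : ‖f - ftilde‖ / (1 + 3 * C) ≤ ⨅ g : Fr, ‖f - g‖ := by
    refine le_ciInf fun g => ?_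
    rw [div_le_iff₀ hpos]
    calc ‖f - ftilde‖ ≤ (1 + 3 * C) * ‖f - g‖ := key g
      _ = ‖f - g‖ * (1 + 3 * C) := mul_comm _ _
  calc ‖f - ftilde‖ = (1 + 3 * C) * (‖f - ftilde‖ / (1 + 3 * C)) := by
        field_simp
    _ ≤ (1 + 3 * C) * ⨅ g : Fr, ‖f - g‖ := by
        exact mul_le_mul_of_nonneg_left hdiv (le_of_lt hpos)
end

section
/- Let U, F, V be real normed vector spaces, D : U → F a linear map, p a seminorm on U, and C_WP ≥ 0 a constant such that p(u) ≤ C_WP · ‖D u‖ for all u ∈ U (well-posedness). Let T : F → V be a linear map with ‖T(g)‖ ≤ ‖g‖ for all g ∈ F, let U_r ⊆ U be a finite-dimensional subspace, and assume the stability inequality ‖g‖ ≤ C · ‖T(g)‖ for all g in F_r = D(U_r), with C ≥ 0. Let u* ∈ U with f = D(u*), and let ũ ∈ U_r satisfy ‖T(f) − T(D(ũ))‖ ≤ 2 · inf_{v ∈ U_r} ‖T(f) − T(D(v))‖. Then p(u* − ũ) ≤ C_WP · (1 + 3C) · inf_{v ∈ U_r} ‖f − D(v)‖. -/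
/-- Theorem 3 (Thefull): error bound for the fully discretized method. For a well-posed
operator equation `D u = f`, a nonexpansive sampling map `T` that is stable with constant
`C` on `Fr = D(Ur)`, a near-best solution `ũ ∈ Ur` of the discretized approximation
problem satisfies the error bound in the well-posedness seminorm. -/
theorem full_discretization_error_bound
    {U F V : Type*} [NormedAddCommGroup U] [NormedSpace ℝ U]
    [NormedAddCommGroup F] [NormedSpace ℝ F]
    [NormedAddCommGroup V] [NormedSpace ℝ V]
    (D : U →ₗ[ℝ] F) (p : Seminorm ℝ U) (C_WP : ℝ) (hCWP : 0 ≤ C_WP)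
    (hwp : ∀ u : U, p u ≤ C_WP * ‖D u‖)
    (T : F →ₗ[ℝ] V) (hT : ∀ g : F, ‖T g‖ ≤ ‖g‖)
    (Ur : Submodule ℝ U) [FiniteDimensional ℝ Ur]
    (C : ℝ) (hC : 0 ≤ C) (hstab : ∀ g ∈ Ur.map D, ‖g‖ ≤ C * ‖T g‖)
    (ustar : U) (f : F) (hf : f = D ustar)
    (utilde : U) (hmem : utilde ∈ Ur)
    (hnear : ‖T f - T (D utilde)‖ ≤ 2 * ⨅ v : Ur, ‖T f - T (D v)‖) :
    p (ustar - utilde) ≤ C_WP * (1 + 3 * C) * ⨅ v : Ur, ‖f - D v‖ := by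
  have h1C : (0:ℝ) ≤ 1 + 3 * C := by linarith
  -- key pointwise bound
  have key : ∀ v : Ur, ‖f - D utilde‖ ≤ (1 + 3 * C) * ‖f - D (v : U)‖ := by
    intro v
    have hinf_le : (⨅ w : Ur, ‖T f - T (D w)‖) ≤ ‖T f - T (D (v : U))‖ :=
      ciInf_le ⟨0, fun x hx => by rcases hx with ⟨w, rfl⟩; exact norm_nonneg _⟩ v
    have hTv : ‖T f - T (D (v : U))‖ ≤ ‖f - D (v : U)‖ := by
      calc ‖T f - T (D (v : U))‖ = ‖T (f - D (v : U))‖ := by rw [map_sub]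
        _ ≤ ‖f - D (v : U)‖ := hT _
    have hdiff : D (v : U) - D utilde ∈ Ur.map D :=
      ⟨(v : U) - utilde, sub_mem v.2 hmem, by rw [map_sub]⟩
    have hst := hstab _ hdiff
    have hTsplit : ‖T (D (v : U) - D utilde)‖
        ≤ ‖T f - T (D (v : U))‖ + ‖T f - T (D utilde)‖ := by
      have : T (D (v : U) - D utilde)
          = -(T f - T (D (v : U))) + (T f - T (D utilde)) := by
        rw [map_sub]; abel
      rw [this]
      exact le_trans (norm_add_le _ _) (by rw [norm_neg])
    have hchain : ‖T f - T (D utilde)‖ ≤ 2 * ‖T f - T (D (v : U))‖ := by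
      calc ‖T f - T (D utilde)‖ ≤ 2 * ⨅ w : Ur, ‖T f - T (D w)‖ := hnear
        _ ≤ 2 * ‖T f - T (D (v : U))‖ := by linarith
    calc ‖f - D utilde‖ ≤ ‖f - D (v : U)‖ + ‖D (v : U) - D utilde‖ := by
          have : f - D utilde = (f - D (v : U)) + (D (v : U) - D utilde) := by abel
          rw [this]; exact norm_add_le _ _
      _ ≤ ‖f - D (v : U)‖ + C * ‖T (D (v : U) - D utilde)‖ := by linarith
      _ ≤ ‖f - D (v : U)‖ + C * (‖T f - T (D (v : U))‖ + ‖T f - T (D utilde)‖) := by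
          nlinarith [hstab _ hdiff]
      _ ≤ ‖f - D (v : U)‖ + C * (3 * ‖T f - T (D (v : U))‖) := by nlinarith
      _ ≤ (1 + 3 * C) * ‖f - D (v : U)‖ := by nlinarith
  have hmain : ‖f - D utilde‖ ≤ (1 + 3 * C) * ⨅ v : Ur, ‖f - D v‖ := by
    rw [Real.mul_iInf_of_nonneg h1C]
    exact le_ciInf key
  have hp : p (ustar - utilde) ≤ C_WP * ‖f - D utilde‖ := by
    calc p (ustar - utilde) ≤ C_WP * ‖D (ustar - utilde)‖ := hwp _
      _ = C_WP * ‖f - D utilde‖ := by rw [hf, map_sub]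
  calc p (ustar - utilde) ≤ C_WP * ‖f - D utilde‖ := hp
    _ ≤ C_WP * ((1 + 3 * C) * ⨅ v : Ur, ‖f - D v‖) :=
        mul_le_mul_of_nonneg_left hmain hCWP
    _ = C_WP * (1 + 3 * C) * ⨅ v : Ur, ‖f - D v‖ := by ring
end

section
/- Let Ω be a nonempty compact topological space and let F_r be a finite-dimensional linear subspace of the space C(Ω, ℝ) of real-valued continuous functions on Ω equipped with the supremum norm. Then there exists a finite set X ⊆ Ω such that for every g ∈ F_r one has sup_{x ∈ Ω} |g(x)| ≤ 2 · max_{x ∈ X} |g(x)|. -/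
/-!
Every function `u` of norm one exceeds `1/2` in absolute value at some point `x`, and by
continuity of evaluation so does every function near `u`. The unit sphere of a
finite-dimensional subspace is compact, so finitely many such points serve for the whole
sphere, and homogeneity extends the bound to the whole subspace.
-/

namespace ContinuousMap

variable {Ω E : Type*} [TopologicalSpace Ω] [CompactSpace Ω] [NormedAddCommGroup E]

theorem exists_lt_norm_apply (u : C(Ω, E)) {M : ℝ} (hM : 0 ≤ M) (h : M < ‖u‖) :
    ∃ x, M < ‖u x‖ := by
  simpa using (u.norm_le hM).not.mp h.not_ge

theorem _root_.IsCompact.exists_finset_lt_norm_apply {K : Set C(Ω, E)} (hK : IsCompact K)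
    (h0 : (0 : C(Ω, E)) ∉ K) {c : ℝ} (hc0 : 0 ≤ c) (hc1 : c < 1) :
    ∃ t : Finset Ω, ∀ u ∈ K, ∃ x ∈ t, c * ‖u‖ < ‖u x‖ := by
  have hopen (x : Ω) : IsOpen {u : C(Ω, E) | c * ‖u‖ < ‖u x‖} :=
    isOpen_lt (continuous_const.mul continuous_norm) (continuous_eval_const x).norm
  have hcover : K ⊆ ⋃ x, {u : C(Ω, E) | c * ‖u‖ < ‖u x‖} := fun u hu => by
    have hu0 : 0 < ‖u‖ := norm_pos_iff.mpr (ne_of_mem_of_not_mem hu h0)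
    simpa using u.exists_lt_norm_apply (by positivity) (mul_lt_of_lt_one_left hu0 hc1)
  obtain ⟨t, ht⟩ := hK.elim_finite_subcover _ hopen hcover
  exact ⟨t, fun u hu => by simpa using ht hu⟩

theorem exists_finset_lt_norm_apply_of_finiteDimensional [NormedSpace ℝ E]
    (F : Submodule ℝ C(Ω, E)) [FiniteDimensional ℝ F] {c : ℝ} (hc0 : 0 ≤ c) (hc1 : c < 1) :
    ∃ t : Finset Ω, ∀ g ∈ F, g ≠ 0 → ∃ x ∈ t, c * ‖g‖ < ‖g x‖ := by
  have hK : IsCompact (((↑) : F → C(Ω, E)) '' Metric.sphere 0 1) :=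
    (isCompact_sphere 0 1).image continuous_subtype_val
  have h0 : (0 : C(Ω, E)) ∉ ((↑) : F → C(Ω, E)) '' Metric.sphere 0 1 := by
    rintro ⟨u, hu, hu0⟩
    simp [hu0] at hu
  obtain ⟨t, ht⟩ := hK.exists_finset_lt_norm_apply h0 hc0 hc1
  refine ⟨t, fun g hg hg0 => ?_⟩
  have hinv : 0 < ‖g‖⁻¹ := inv_pos.mpr (norm_pos_iff.mpr hg0)
  have hu : ‖g‖⁻¹ • g ∈ ((↑) : F → C(Ω, E)) '' Metric.sphere 0 1 :=
    ⟨⟨‖g‖⁻¹ • g, F.smul_mem _ hg⟩, by simp [norm_smul, hg0], rfl⟩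
  obtain ⟨x, hx, hcx⟩ := ht _ hu
  refine ⟨x, hx, lt_of_mul_lt_mul_left ?_ hinv.le⟩
  simpa [norm_smul, hinv.le, mul_left_comm c] using hcx

end ContinuousMap

/-- Theorem 4 (TheSupStab): norming-set result in `C(Ω)` under the sup norm.
Every finite-dimensional subspace admits a finite set of sampling points with
stability constant at most 2. -/
theorem sup_norm_norming_set
    {Ω : Type*} [TopologicalSpace Ω] [CompactSpace Ω] [Nonempty Ω]
    (Fr : Submodule ℝ C(Ω, ℝ)) [FiniteDimensional ℝ Fr] :
    ∃ (X : Finset Ω) (hX : X.Nonempty),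
      ∀ g ∈ Fr, ‖g‖ ≤ 2 * X.sup' hX (fun x => |g x|) := by
  classical
  obtain ⟨t, ht⟩ :=
    ContinuousMap.exists_finset_lt_norm_apply_of_finiteDimensional Fr (c := 1 / 2)
      (by norm_num) (by norm_num)
  obtain ⟨x₀⟩ := ‹Nonempty Ω›
  refine ⟨insert x₀ t, Finset.insert_nonempty _ _, fun g hg => ?_⟩
  rcases eq_or_ne g 0 with rfl | hg0
  · simp
  · obtain ⟨x, hx, hgx⟩ := ht g hg hg0
    have hxX : x ∈ insert x₀ t := Finset.mem_insert_of_mem hx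
    rw [Real.norm_eq_abs] at hgx
    linarith [Finset.le_sup' (fun x => |g x|) hxX]
end

section
/- Let K be a nonempty compact topological space and Γ ⊆ K a nonempty closed subset. Let U_r be a finite-dimensional linear subspace of C(K, ℝ) such that every u ∈ U_r satisfies the maximum principle sup_{x ∈ K} |u(x)| ≤ sup_{y ∈ Γ} |u(y)|. Then there exists a finite set X ⊆ Γ such that for every u ∈ U_r one has sup_{x ∈ K} |u(x)| ≤ 2 · max_{y ∈ X} |u(y)|. -/
/-!
By the maximum principle and compactness of `Γ`, every `u ∈ Ur` attains its norm at a point of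
`Γ`. The unit sphere of the finite-dimensional space `Ur` is compact, so finitely many balls of
radius `1/2` cover it; a point of `Γ` where the centre `v` of such a ball attains its norm gives
`|w y| ≥ |v y| - ‖v - w‖ > 1/2` for every `w` in the ball. These finitely many points norm `Ur`
up to the factor `2`, by homogeneity.
-/

open Metric

theorem exists_finset_norm_le_two_mul_abs_apply {E ι : Type*} [NormedAddCommGroup E]
    [NormedSpace ℝ E] [FiniteDimensional ℝ E] (L : ι → E →ₗ[ℝ] ℝ) (hL : ∀ i u, |L i u| ≤ ‖u‖)
    (hnorming : ∀ u, ∃ i, ‖u‖ ≤ |L i u|) :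
    ∃ s : Finset ι, ∀ u, ∃ i ∈ s, ‖u‖ ≤ 2 * |L i u| := by
  classical
  choose j hj using hnorming
  obtain ⟨t, ht_sphere, ht_fin, ht_cover⟩ :=
    (isCompact_sphere (0 : E) 1).finite_cover_balls (e := 1 / 2) (by norm_num)
  refine ⟨insert (j 0) (ht_fin.toFinset.image j), fun u => ?_⟩
  rcases eq_or_ne u 0 with rfl | hu
  · exact ⟨j 0, Finset.mem_insert_self _ _, by simp⟩
  have hu_pos : 0 < ‖u‖ := norm_pos_iff.2 hu
  set w := ‖u‖⁻¹ • u with hw_def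
  have hw : w ∈ sphere (0 : E) 1 := by simp [w, norm_smul, hu]
  obtain ⟨v, hvt, hwv⟩ := Set.mem_iUnion₂.1 (ht_cover hw)
  refine ⟨j v, Finset.mem_insert_of_mem (Finset.mem_image_of_mem _ (ht_fin.mem_toFinset.2 hvt)), ?_⟩
  have hv : ‖v‖ = 1 := by simpa using ht_sphere hvt
  have hvw : ‖v - w‖ < 1 / 2 := by rwa [mem_ball, dist_comm, dist_eq_norm] at hwv
  have hw_half : 1 / 2 ≤ |L (j v) w| :=
    calc 1 / 2 ≤ ‖v‖ - ‖v - w‖ := by linarith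
      _ ≤ |L (j v) v| - |L (j v) (v - w)| := sub_le_sub (hj v) (hL _ _)
      _ ≤ |L (j v) w| := by
        rw [map_sub]
        linarith [abs_sub_abs_le_abs_sub (L (j v) v) (L (j v) w)]
  have hLw : |L (j v) w| = ‖u‖⁻¹ * |L (j v) u| := by
    rw [hw_def, map_smul, smul_eq_mul, abs_mul, abs_of_pos (inv_pos.2 hu_pos)]
  rw [hLw, ← div_eq_inv_mul, le_div_iff₀ hu_pos] at hw_half
  linarith

theorem ContinuousMap.exists_norm_le_abs_apply_of_le_iSup {K : Type*} [TopologicalSpace K]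
    [CompactSpace K] {Γ : Set K} (hΓ : IsCompact Γ) (hΓne : Γ.Nonempty) {u : C(K, ℝ)}
    (hu : ‖u‖ ≤ ⨆ y : Γ, |u y|) : ∃ y ∈ Γ, ‖u‖ ≤ |u y| := by
  obtain ⟨y, hyΓ, hy⟩ := hΓ.exists_isMaxOn hΓne u.continuous.abs.continuousOn
  have : Nonempty Γ := hΓne.to_subtype
  exact ⟨y, hyΓ, hu.trans (ciSup_le fun z => hy z.2)⟩

theorem trefftz_boundary_norming_set_general
    {K : Type*} [TopologicalSpace K] [CompactSpace K]
    (Γ : Set K) (hΓcl : IsClosed Γ) (hΓne : Γ.Nonempty)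
    (Ur : Submodule ℝ C(K, ℝ)) [FiniteDimensional ℝ Ur]
    (hmax : ∀ u ∈ Ur, ‖u‖ ≤ ⨆ y : Γ, |u (y : K)|) :
    ∃ (X : Finset K) (hX : X.Nonempty), ↑X ⊆ Γ ∧
      ∀ u ∈ Ur, ‖u‖ ≤ 2 * X.sup' hX (fun y => |u y|) := by
  let L (y : Γ) : Ur →ₗ[ℝ] ℝ := (ContinuousMap.evalCLM ℝ (y : K)).toLinearMap ∘ₗ Ur.subtype
  have hL (y : Γ) (u : Ur) : |L y u| ≤ ‖u‖ := by
    simpa [L] using ContinuousMap.norm_coe_le_norm (u : C(K, ℝ)) y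
  have hnorming (u : Ur) : ∃ y, ‖u‖ ≤ |L y u| := by
    obtain ⟨y, hyΓ, hy⟩ :=
      ContinuousMap.exists_norm_le_abs_apply_of_le_iSup hΓcl.isCompact hΓne (hmax u u.2)
    exact ⟨⟨y, hyΓ⟩, hy⟩
  obtain ⟨s, hs⟩ := exists_finset_norm_le_two_mul_abs_apply (E := Ur) L hL hnorming
  have hs_ne : s.Nonempty := by
    obtain ⟨y, hy, -⟩ := hs 0
    exact ⟨y, hy⟩
  refine ⟨s.map (.subtype _), hs_ne.map, by simp, fun u hu => ?_⟩
  obtain ⟨y, hy, hle⟩ := hs ⟨u, hu⟩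
  exact hle.trans (mul_le_mul_of_nonneg_left
    (Finset.le_sup' (fun x => |u x|) (Finset.mem_map_of_mem (.subtype _) hy)) zero_le_two)

/-- Theorem 6 (TheTrefftz): if every function in the finite-dimensional trial space
`Ur ⊆ C(K, ℝ)` satisfies a maximum principle with respect to the closed boundary part
`Γ ⊆ K`, then there is a finite set of test points on `Γ` that is norming for `Ur`
with stability constant 2. -/
theorem trefftz_boundary_norming_set
    {K : Type*} [TopologicalSpace K] [CompactSpace K] [Nonempty K]
    (Γ : Set K) (hΓcl : IsClosed Γ) (hΓne : Γ.Nonempty)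
    (Ur : Submodule ℝ C(K, ℝ)) [FiniteDimensional ℝ Ur]
    (hmax : ∀ u ∈ Ur, ‖u‖ ≤ ⨆ y : Γ, |u (y : K)|) :
    ∃ (X : Finset K) (hX : X.Nonempty), ↑X ⊆ Γ ∧
      ∀ u ∈ Ur, ‖u‖ ≤ 2 * X.sup' hX (fun y => |u y|) :=
  trefftz_boundary_norming_set_general Γ hΓcl hΓne Ur hmax
end

section
/- Let Ω be a nonempty compact topological space and F_r a finite-dimensional linear subspace of C(Ω, ℝ) with the sup norm. Then there exists a finite set X ⊆ Ω with the following quasi-optimality property: for every f ∈ C(Ω, ℝ) and every g ∈ F_r satisfying max_{x ∈ X} |f(x) − g(x)| ≤ inf_{h ∈ F_r} max_{x ∈ X} |f(x) − h(x)| + inf_{h ∈ F_r} sup_{x ∈ Ω} |f(x) − h(x)|, one has sup_{x ∈ Ω} |f(x) − g(x)| ≤ 5 · inf_{h ∈ F_r} sup_{x ∈ Ω} |f(x) − h(x)|. -/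
/-!
The unit sphere of the finite-dimensional space `Fr` is compact, and every `v` on it attains
`|v x| = 1` at some `x ∈ Ω`; so the open sets `{v | 1 < (4/3) |v x|}` cover the sphere, and
finitely many points `X` give `‖u‖ ≤ (4/3) max_X |u|` on `Fr`. Write `E = inf_h ‖f - h‖`.
For each `h ∈ Fr`, applying this to `g - h ∈ Fr`, and bounding both `max_X |f - h|` and the
discrete best error by `‖f - h‖`, gives
`‖f - g‖ ≤ ‖f - h‖ + (4/3) (max_X |f - g| + max_X |f - h|) ≤ (11/3) ‖f - h‖ + (4/3) E`;
the infimum over `h` yields `5 E`.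
-/

open Metric

theorem Finset.sup'_abs_nonneg {α : Type*} (X : Finset α) (hX : X.Nonempty) (a : α → ℝ) :
    0 ≤ X.sup' hX fun x => |a x| :=
  let ⟨_, hx⟩ := hX
  Finset.le_sup'_of_le _ hx (abs_nonneg _)

theorem Finset.sup'_abs_sub_le {α : Type*} (X : Finset α) (hX : X.Nonempty) (a b c : α → ℝ) :
    X.sup' hX (fun x => |b x - c x|) ≤
      X.sup' hX (fun x => |a x - b x|) + X.sup' hX (fun x => |a x - c x|) :=
  Finset.sup'_le _ _ fun x hx => calc
    |b x - c x| ≤ |a x - b x| + |a x - c x| := by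
      rw [abs_sub_comm (a x)]
      exact abs_sub_le _ _ _
    _ ≤ _ := add_le_add (Finset.le_sup' (fun x => |a x - b x|) hx)
        (Finset.le_sup' (fun x => |a x - c x|) hx)

section

variable {Ω : Type*} [TopologicalSpace Ω]

theorem ContinuousMap.exists_norm_apply_eq_norm [CompactSpace Ω] [Nonempty Ω]
    {E : Type*} [NormedAddCommGroup E] (u : C(Ω, E)) : ∃ x, ‖u x‖ = ‖u‖ := by
  obtain ⟨x, -, hx⟩ :=
    isCompact_univ.exists_isMaxOn Set.univ_nonempty (continuous_norm.comp u.continuous).continuousOn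
  exact ⟨x, le_antisymm (u.norm_coe_le_norm x)
    ((u.norm_le_of_nonempty).2 fun y => hx (Set.mem_univ y))⟩

theorem ContinuousMap.sup'_abs_apply_le_norm [CompactSpace Ω] (X : Finset Ω)
    (hX : X.Nonempty) (u : C(Ω, ℝ)) : X.sup' hX (fun x => |u x|) ≤ ‖u‖ :=
  Finset.sup'_le _ _ fun x _ => u.norm_coe_le_norm x

theorem Submodule.exists_finset_norm_le_mul_sup'_abs [CompactSpace Ω] [Nonempty Ω]
    (V : Submodule ℝ C(Ω, ℝ)) [FiniteDimensional ℝ V] {C : ℝ} (hC : 1 < C) :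
    ∃ (X : Finset Ω) (hX : X.Nonempty), ∀ u ∈ V, ‖u‖ ≤ C * X.sup' hX fun x => |u x| := by
  classical
  have hcover : sphere (0 : V) 1 ⊆ ⋃ x : Ω, {v : V | 1 < C * |(v : C(Ω, ℝ)) x|} := by
    intro v hv
    obtain ⟨x, hx⟩ := (v : C(Ω, ℝ)).exists_norm_apply_eq_norm
    have hv1 : ‖(v : C(Ω, ℝ))‖ = 1 := mem_sphere_zero_iff_norm.mp hv
    refine Set.mem_iUnion.mpr ⟨x, ?_⟩
    rw [Set.mem_ofPred_eq, ← Real.norm_eq_abs, hx, hv1, mul_one]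
    exact hC
  obtain ⟨S, hS⟩ := (isCompact_sphere (0 : V) 1).elim_finite_subcover _
    (fun x => isOpen_lt continuous_const
      (continuous_const.mul ((continuous_eval_const x).comp continuous_subtype_val).abs)) hcover
  obtain ⟨x₀⟩ := ‹Nonempty Ω›
  refine ⟨insert x₀ S, Finset.insert_nonempty _ _, fun u hu => ?_⟩
  rcases eq_or_ne u 0 with rfl | hu0
  · simp
  have hpos : 0 < ‖u‖ := norm_pos_iff.mpr hu0
  set v : V := ‖u‖⁻¹ • ⟨u, hu⟩
  have hv : v ∈ sphere (0 : V) 1 := by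
    rw [mem_sphere_zero_iff_norm]
    change ‖‖u‖⁻¹ • u‖ = 1
    rw [norm_smul, norm_inv, norm_norm]
    exact inv_mul_cancel₀ hpos.ne'
  obtain ⟨x, hxS, hx⟩ := Set.mem_iUnion₂.mp (hS hv)
  have hvx : 1 < C * (‖u‖⁻¹ * |u x|) := by
    simpa [v, abs_mul] using hx
  have hux : ‖u‖ < C * |u x| := calc
    ‖u‖ = ‖u‖ * 1 := (mul_one _).symm
    _ < ‖u‖ * (C * (‖u‖⁻¹ * |u x|)) := mul_lt_mul_of_pos_left hvx hpos
    _ = C * |u x| := by field_simp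
  exact hux.le.trans <| mul_le_mul_of_nonneg_left
    (Finset.le_sup' (fun x => |u x|) (Finset.mem_insert_of_mem hxS)) (by linarith)

theorem Submodule.norm_sub_le_of_sup'_abs_le [CompactSpace Ω] (V : Submodule ℝ C(Ω, ℝ))
    {X : Finset Ω} (hX : X.Nonempty) {C : ℝ} (hC : 0 ≤ C)
    (hnorming : ∀ u ∈ V, ‖u‖ ≤ C * X.sup' hX fun x => |u x|) {f g : C(Ω, ℝ)} (hg : g ∈ V)
    (hnear : X.sup' hX (fun x => |f x - g x|) ≤
      (⨅ h : V, X.sup' hX fun x => |f x - (h : C(Ω, ℝ)) x|) + ⨅ h : V, ‖f - (h : C(Ω, ℝ))‖) :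
    ‖f - g‖ ≤ (1 + 3 * C) * ⨅ h : V, ‖f - (h : C(Ω, ℝ))‖ := by
  set E := ⨅ h : V, ‖f - (h : C(Ω, ℝ))‖
  have hd : ∀ h : V, (⨅ h : V, X.sup' hX fun x => |f x - (h : C(Ω, ℝ)) x|) ≤ ‖f - h‖ :=
    fun h => (ciInf_le ⟨0, Set.forall_mem_range.mpr fun _ => X.sup'_abs_nonneg hX _⟩ h).trans
      ((f - h).sup'_abs_apply_le_norm X hX)
  have hbound : ∀ h : V, ‖f - g‖ ≤ (1 + 2 * C) * ‖f - h‖ + C * E := fun h =>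
    calc ‖f - g‖ ≤ ‖f - h‖ + ‖g - h‖ := by
          simpa only [dist_eq_norm] using dist_triangle_right f g (h : C(Ω, ℝ))
      _ ≤ ‖f - h‖ + C * (X.sup' hX (fun x => |f x - g x|) +
            X.sup' hX fun x => |f x - (h : C(Ω, ℝ)) x|) := by
        gcongr
        exact (hnorming _ (V.sub_mem hg h.2)).trans
          (mul_le_mul_of_nonneg_left (X.sup'_abs_sub_le hX f g h) hC)
      _ ≤ ‖f - h‖ + C * ((‖f - h‖ + E) + ‖f - h‖) := by
        gcongr
        · exact hnear.trans (add_le_add_left (hd h) _)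
        · exact (f - h).sup'_abs_apply_le_norm X hX
      _ = (1 + 2 * C) * ‖f - h‖ + C * E := by ring
  have hpos : 0 < 1 + 2 * C := by positivity
  have hE : (‖f - g‖ - C * E) / (1 + 2 * C) ≤ E :=
    le_ciInf fun h => by rw [div_le_iff₀' hpos]; linarith [hbound h]
  rw [div_le_iff₀' hpos] at hE
  linarith

end

/-- Quantitative content of Theorem 7 (TheMPS): for any finite-dimensional trial
subspace `Fr ⊆ C(Ω, ℝ)` there is a finite point set `X ⊆ Ω` such that any near-best
discrete sup-norm approximation on `X` of a continuous function `f` from `Fr` is a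
quasi-best sup-norm approximation on all of `Ω`, with factor 5. -/
theorem mps_discrete_quasi_optimality
    {Ω : Type*} [TopologicalSpace Ω] [CompactSpace Ω] [Nonempty Ω]
    (Fr : Submodule ℝ C(Ω, ℝ)) [FiniteDimensional ℝ Fr] :
    ∃ (X : Finset Ω) (hX : X.Nonempty),
      ∀ f : C(Ω, ℝ), ∀ g ∈ Fr,
        X.sup' hX (fun x => |f x - g x|) ≤
            (⨅ h : Fr, X.sup' hX (fun x => |f x - (h : C(Ω, ℝ)) x|)) +
            (⨅ h : Fr, ‖f - (h : C(Ω, ℝ))‖) →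
        ‖f - g‖ ≤ 5 * ⨅ h : Fr, ‖f - (h : C(Ω, ℝ))‖ := by
  obtain ⟨X, hX, hnorming⟩ := Fr.exists_finset_norm_le_mul_sup'_abs (C := 4 / 3) (by norm_num)
  refine ⟨X, hX, fun f g hg hnear => ?_⟩
  convert Fr.norm_sub_le_of_sup'_abs_le hX (by norm_num) hnorming hg hnear using 2
  norm_num
end

section
/- There exist a constant c > 1 and a natural number N₀ such that for every N ≥ N₀ there is a nonzero real polynomial p of degree at most N − 1 with max_{1 ≤ j ≤ N} |p(x_j)| > 0 and sup_{x ∈ [−1,1]} |p(x)| ≥ c^N · max_{1 ≤ j ≤ N} |p(x_j)|, where x_j = −1 + 2(j − 1)/(N − 1), j = 1, …, N, are the N equidistant points in [−1, 1]. -/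
/-!
Let `n = N - 1` and let `ℓ` be the Lagrange basis polynomial of the middle node `x_{n/2}`: it is
`1` at that node and `0` at the other nodes, so its maximum over the nodes is `1`. The affine change
of variables `x = -1 + 2t/n` turns the nodes into `0, …, n`, and at `t = 1/2` (the midpoint of the
first subinterval) the product formula gives
`|ℓ| = C(2n, n) C(n, n/2) / (4ⁿ |2⌊n/2⌋ - 1|) ≥ 2ᴺ / (4N³)`,
which exceeds `(3/2)ᴺ` for large `N`.
-/

open Finset Polynomial
open scoped Nat

namespace Lagrange

variable {F ι : Type*} [Field F] [DecidableEq ι]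

theorem eval_basis (s : Finset ι) (v : ι → F) (i : ι) (x : F) :
    (Lagrange.basis s v i).eval x = ∏ j ∈ s.erase i, (x - v j) / (v i - v j) := by
  simp [Lagrange.basis, basisDivisor, eval_prod, div_eq_inv_mul]

theorem eval_basis_affine (s : Finset ι) (v : ι → F) (i : ι) {a h : F} (hh : h ≠ 0) (x : F) :
    (Lagrange.basis s (fun j => a + h * v j) i).eval (a + h * x) =
      (Lagrange.basis s v i).eval x := by
  simp only [eval_basis]
  refine prod_congr rfl fun j _ => ?_
  rw [add_sub_add_left_eq_sub, add_sub_add_left_eq_sub, ← mul_sub, ← mul_sub,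
    mul_div_mul_left _ _ hh]

theorem sup'_abs_eval_basis_at_nodes {N : ℕ} (hne : (univ : Finset (Fin N)).Nonempty)
    {v : ℕ → ℝ} (hv : Set.InjOn v (range N)) {i : ℕ} (hi : i < N) :
    univ.sup' hne (fun j : Fin N => |(Lagrange.basis (range N) v i).eval (v j)|) = 1 := by
  refine le_antisymm (sup'_le _ _ fun j _ => ?_) ?_
  · rcases eq_or_ne i j with rfl | hij
    · rw [eval_basis_self hv (mem_range.2 hi), abs_one]
    · rw [eval_basis_of_ne hij (mem_range.2 j.isLt), abs_zero]
      exact zero_le_one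
  · refine le_of_eq_of_le ?_ (le_sup' _ (mem_univ ⟨i, hi⟩))
    rw [eval_basis_self hv (mem_range.2 hi), abs_one]

end Lagrange

theorem Nat.centralBinom_mul_factorial_mul_factorial (n : ℕ) :
    n.centralBinom * n ! * n ! = (2 * n)! := by
  rw [Nat.centralBinom_eq_two_mul_choose]
  simpa [two_mul] using Nat.choose_mul_factorial_mul_factorial (Nat.le_add_right n n)

theorem Nat.two_pow_le_succ_mul_choose_half (n : ℕ) : 2 ^ n ≤ (n + 1) * n.choose (n / 2) :=
  calc 2 ^ n = ∑ i ∈ range (n + 1), n.choose i := (Nat.sum_range_choose n).symm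
    _ ≤ ∑ _ ∈ range (n + 1), n.choose (n / 2) := sum_le_sum fun i _ => Nat.choose_le_middle i n
    _ = (n + 1) * n.choose (n / 2) := by rw [sum_const, card_range, smul_eq_mul]

theorem prod_range_abs_half_sub (n : ℕ) :
    ∏ k ∈ range (n + 1), |(1 / 2 : ℝ) - k| = (2 * n)! / (2 * 4 ^ n * n !) := by
  induction n with
  | zero => norm_num
  | succ n ih =>
    rw [prod_range_succ, ih, abs_of_nonpos (by push_cast; linarith),
      show 2 * (n + 1) = 2 * n + 1 + 1 by ring]
    simp only [Nat.factorial_succ]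
    push_cast
    field_simp
    ring

theorem prod_erase_abs_natCast_sub {m n : ℕ} (hmn : m ≤ n) :
    ∏ k ∈ (range (n + 1)).erase m, |(m : ℝ) - k| = m ! * (n - m)! := by
  induction n, hmn using Nat.le_induction with
  | base =>
    rw [range_add_one, erase_insert notMem_range_self, Nat.sub_self, Nat.factorial_zero,
      Nat.cast_one, mul_one, ← Nat.descFactorial_self, Nat.descFactorial_eq_prod_range,
      Nat.cast_prod]
    refine prod_congr rfl fun k hk => ?_
    have hkm := (mem_range.1 hk).le
    rw [Nat.cast_sub hkm, abs_of_nonneg (sub_nonneg.2 (by exact_mod_cast hkm))]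
  | succ n hmn ih =>
    rw [range_add_one, erase_insert_of_ne (by omega), prod_insert (by simp), ih,
      Nat.succ_sub hmn, Nat.factorial_succ, abs_sub_comm,
      abs_of_nonneg (by push_cast; linarith [(Nat.cast_le (α := ℝ)).2 hmn])]
    push_cast [Nat.cast_sub hmn]
    ring

theorem abs_eval_basis_range_half {m n : ℕ} (hmn : m ≤ n) :
    |(Lagrange.basis (range (n + 1)) (Nat.cast : ℕ → ℝ) m).eval (1 / 2)| =
      n.centralBinom * n.choose m / (4 ^ n * |2 * (m : ℝ) - 1|) := by
  have hodd : |2 * (m : ℝ) - 1| ≠ 0 := by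
    rw [abs_ne_zero, sub_ne_zero]
    exact_mod_cast (by omega : 2 * m ≠ 1)
  have hnodes := mul_prod_erase _ (fun k : ℕ => |(1 / 2 : ℝ) - k|)
    (mem_range.2 (Nat.lt_succ_of_le hmn))
  rw [prod_range_abs_half_sub, abs_sub_comm, show (m : ℝ) - 1 / 2 = (2 * m - 1) / 2 by ring,
    abs_div, abs_two, mul_comm] at hnodes
  rw [Lagrange.eval_basis, abs_prod]
  simp only [abs_div]
  rw [prod_div_distrib, prod_erase_abs_natCast_sub hmn, eq_div_of_mul_eq (by positivity) hnodes,
    ← Nat.centralBinom_mul_factorial_mul_factorial, ← Nat.choose_mul_factorial_mul_factorial hmn]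
  push_cast
  field_simp

theorem two_pow_div_le_abs_eval_basis_range_half {n : ℕ} (hn : 0 < n) :
    2 ^ (n + 1) / (4 * ((n : ℝ) + 1) ^ 3) ≤
      |(Lagrange.basis (range (n + 1)) (Nat.cast : ℕ → ℝ) (n / 2)).eval (1 / 2)| := by
  rw [abs_eval_basis_range_half (Nat.div_le_self n 2)]
  have hcentral : (4 : ℝ) ^ n ≤ 2 * n * n.centralBinom := by
    exact_mod_cast Nat.four_pow_le_two_mul_self_mul_centralBinom n hn
  have hmiddle : (2 : ℝ) ^ n ≤ (n + 1) * n.choose (n / 2) := by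
    exact_mod_cast Nat.two_pow_le_succ_mul_choose_half n
  have hodd : 0 < |2 * ((n / 2 : ℕ) : ℝ) - 1| :=
    abs_pos.2 (sub_ne_zero.2 (by exact_mod_cast (by omega : 2 * (n / 2) ≠ 1)))
  have hodd_le : |2 * ((n / 2 : ℕ) : ℝ) - 1| ≤ n := by
    have : 2 * ((n / 2 : ℕ) : ℝ) ≤ n := by exact_mod_cast Nat.mul_div_le n 2
    rw [abs_le]
    constructor <;>
      linarith [(Nat.cast_nonneg (n / 2) : (0 : ℝ) ≤ _), (Nat.one_le_cast.2 hn : (1 : ℝ) ≤ n)]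
  rw [div_le_div_iff₀ (by positivity) (by positivity)]
  calc 2 ^ (n + 1) * (4 ^ n * |2 * ((n / 2 : ℕ) : ℝ) - 1|)
      = 2 * (4 ^ n * 2 ^ n) * |2 * ((n / 2 : ℕ) : ℝ) - 1| := by ring
    _ ≤ 2 * (4 ^ n * 2 ^ n) * n := by gcongr
    _ ≤ 2 * n * (2 * n * n.centralBinom * ((n + 1) * n.choose (n / 2))) := by
        rw [mul_right_comm]; gcongr
    _ = (n ^ 2 * (n + 1)) * (4 * n.centralBinom * n.choose (n / 2)) := by ring
    _ ≤ (n + 1) ^ 3 * (4 * n.centralBinom * n.choose (n / 2)) := by gcongr; nlinarith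
    _ = n.centralBinom * n.choose (n / 2) * (4 * (n + 1) ^ 3) := by ring

theorem eventually_three_halves_pow_mul_le_two_pow :
    ∀ᶠ N : ℕ in Filter.atTop, (3 / 2 : ℝ) ^ N * (4 * N ^ 3) ≤ 2 ^ N := by
  filter_upwards [(tendsto_pow_const_div_const_pow_of_one_lt 3
    (by norm_num : (1 : ℝ) < 4 / 3)).eventually (gt_mem_nhds (by norm_num : (0 : ℝ) < 1 / 4))]
    with N hN
  rw [div_lt_iff₀ (by positivity)] at hN
  calc (3 / 2 : ℝ) ^ N * (4 * N ^ 3) ≤ (3 / 2) ^ N * (4 / 3) ^ N := by gcongr; linarith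
    _ = 2 ^ N := by rw [← mul_pow]; norm_num

/-- Exponential instability at equidistant nodes: there are `c > 1` and `N₀` such that
for every `N ≥ N₀` some nonzero polynomial of degree at most `N - 1` has sup norm on
`[-1,1]` at least `c^N` times its maximal absolute value at the `N` equidistant nodes
`x_j = -1 + 2(j-1)/(N-1)`. -/
theorem equidistant_nodes_exponential_instability :
    ∃ c : ℝ, 1 < c ∧
      ∃ (N₀ : ℕ) (hN₀ : 2 ≤ N₀),
        ∀ (N : ℕ) (hN : N₀ ≤ N),
          ∃ p : Polynomial ℝ, p ≠ 0 ∧ p.natDegree ≤ N - 1 ∧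
            0 < Finset.univ.sup' ⟨⟨0, by omega⟩, Finset.mem_univ _⟩
                (fun j : Fin N => |p.eval (-1 + 2 * (j : ℝ) / ((N : ℝ) - 1))|) ∧
            ∃ x ∈ Set.Icc (-1 : ℝ) 1,
              c ^ N *
                  Finset.univ.sup' ⟨⟨0, by omega⟩, Finset.mem_univ _⟩
                    (fun j : Fin N => |p.eval (-1 + 2 * (j : ℝ) / ((N : ℝ) - 1))|) ≤
                |p.eval x| := by
  obtain ⟨N₁, hN₁⟩ := Filter.eventually_atTop.1 eventually_three_halves_pow_mul_le_two_pow
  refine ⟨3 / 2, by norm_num, max N₁ 2, le_max_right _ _, fun N hN => ?_⟩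
  obtain ⟨n, rfl⟩ : ∃ n, N = n + 1 := ⟨N - 1, by omega⟩
  have hn : (0 : ℝ) < n := by exact_mod_cast (by omega : 0 < n)
  set v : ℕ → ℝ := fun k => -1 + 2 / n * k
  have hnode : ∀ k : ℕ, -1 + 2 * (k : ℝ) / (((n + 1 : ℕ) : ℝ) - 1) = v k := by
    intro k; push_cast; ring
  have hv : Set.InjOn v (range (n + 1)) := fun a _ b _ hab => by
    simpa [v, hn.ne'] using hab
  have hm : n / 2 ∈ range (n + 1) := mem_range.2 (by omega)
  refine ⟨Lagrange.basis (range (n + 1)) v (n / 2), Lagrange.basis_ne_zero hv hm,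
    (Lagrange.natDegree_basis hv hm).trans_le (by simp), ?_⟩
  simp only [hnode]
  -- the statement proves nonemptiness by an anonymous constructor, which `rw` does not match
  generalize_proofs hne
  rw [Lagrange.sup'_abs_eval_basis_at_nodes hne hv (mem_range.1 hm)]
  refine ⟨zero_lt_one, -1 + 2 / n * (1 / 2), ?_, ?_⟩
  · have hstep : 2 / (n : ℝ) ≤ 2 := div_le_self zero_le_two (by exact_mod_cast (by omega : 1 ≤ n))
    constructor <;> nlinarith [(by positivity : (0 : ℝ) ≤ 2 / n)]
  · rw [mul_one, Lagrange.eval_basis_affine _ _ _ (by positivity)]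
    refine le_trans ?_ (two_pow_div_le_abs_eval_basis_range_half (by omega))
    rw [le_div_iff₀ (by positivity)]
    exact_mod_cast hN₁ (n + 1) (by omega)
end

section
/- There exist constants C₀ ≥ 1 and c ≥ 1 such that for all natural numbers M ≥ 1 and N with N ≥ C₀ · M, every real polynomial p of degree at most M − 1 satisfies sup_{x ∈ [−1,1]} |p(x)| ≤ c · max_{1 ≤ k ≤ N} |p(x_k)|, where x_k = cos((2k − 1)π / (2N)), k = 1, …, N, are the N Chebyshev nodes in [−1, 1]. -/
/-!
Write `p(cos θ) = ∑_{l ≤ m} a_l cos(lθ)` with `m = M - 1`. The de la Vallée Poussin kernel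
`V_m = 2 F_{2m+1} - F_m`, a combination of Fejér kernels, reproduces every `cos(lθ)` with `l ≤ m`,
and it does so already for the node sum `∑_κ` in place of `(1/π) ∫_0^π`, because the `N`-point
Chebyshev quadrature is exact for `cos(dφ)` with `|d| < 2N`; this needs `3m + 1 < 2N`. Hence
`N p(cos θ) = ∑_κ p(cos θ_κ) V_m(θ, θ_κ)`. Since Fejér kernels are nonnegative with node sum `N`,
`∑_κ |V_m(θ, θ_κ)| ≤ 3N`, and `|p(cos θ)| ≤ 3 max_κ |p(cos θ_κ)|` follows.
-/

open Real Finset Polynomial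

noncomputable def chebAngle (N k : ℕ) : ℝ := (2 * k + 1) * π / (2 * N)

theorem sum_cos_nat_mul_chebAngle {N d : ℕ} (hd0 : d ≠ 0) (hd : d < 2 * N) :
    ∑ k ∈ range N, cos (d * chebAngle N k) = 0 := by
  have hN : (N : ℝ) ≠ 0 := by norm_cast; omega
  set s := sin (d * π / (2 * N))
  have hs : s ≠ 0 := by
    refine (sin_pos_of_pos_of_lt_pi (by positivity) ?_).ne'
    rw [div_lt_iff₀ (by positivity)]
    have : (d : ℝ) < 2 * N := by exact_mod_cast hd
    nlinarith [pi_pos]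
  -- `2 s cos(d θ_k)` telescopes, since `d θ_k ± d π / (2N)` are `d (k + 1) π / N` and `d k π / N`.
  have telescope (k : ℕ) :
      2 * s * cos (d * chebAngle N k) = sin (d * (k + 1 : ℕ) * π / N) - sin (d * k * π / N) := by
    have h₁ : (d : ℝ) * (k + 1 : ℕ) * π / N = d * chebAngle N k + d * π / (2 * N) := by
      unfold chebAngle; push_cast; field_simp; ring
    have h₂ : (d : ℝ) * k * π / N = d * chebAngle N k - d * π / (2 * N) := by
      unfold chebAngle; field_simp; ring
    rw [h₁, h₂, sin_add, sin_sub]; ring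
  have hsum : 2 * s * ∑ k ∈ range N, cos (d * chebAngle N k) = 0 := by
    rw [mul_sum, sum_congr rfl fun k _ => telescope k,
      sum_range_sub (fun k : ℕ => sin (d * k * π / N)), mul_div_right_comm,
      mul_div_cancel_right₀ _ hN]
    simp [sin_nat_mul_pi]
  simpa [hs] using hsum

theorem sum_cos_int_mul_chebAngle {N : ℕ} {d : ℤ} (hd : d.natAbs < 2 * N) :
    ∑ k ∈ range N, cos (d * chebAngle N k) = if d = 0 then (N : ℝ) else 0 := by
  split_ifs with h
  · simp [h]
  · have hcos (x : ℝ) : cos (d * x) = cos (d.natAbs * x) := by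
      rw [Nat.cast_natAbs, Int.cast_abs]
      rcases abs_choice (d : ℝ) with h' | h' <;> simp [h']
    simp_rw [hcos]
    exact sum_cos_nat_mul_chebAngle (by omega) hd

theorem sum_cos_mul_cos_chebAngle {N l : ℕ} {d : ℤ} (h : l + d.natAbs < 2 * N) :
    ∑ k ∈ range N, cos (l * chebAngle N k) * cos (d * chebAngle N k)
      = N / 2 * ((if d = l then 1 else 0) + (if d = -l then 1 else 0)) := by
  have hprod (x : ℝ) :
      cos (l * x) * cos (d * x) = (cos ((l - d : ℤ) * x) + cos ((l + d : ℤ) * x)) / 2 := by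
    push_cast; rw [sub_mul, add_mul, cos_sub, cos_add]; ring
  simp_rw [hprod]
  rw [← sum_div, sum_add_distrib, sum_cos_int_mul_chebAngle (by omega),
    sum_cos_int_mul_chebAngle (by omega)]
  have e₁ : (l : ℤ) - d = 0 ↔ d = l := by omega
  have e₂ : (l : ℤ) + d = 0 ↔ d = -l := by omega
  simp only [e₁, e₂]
  split_ifs <;> ring

theorem sq_sum_cos_add_sq_sum_sin (n : ℕ) (t : ℝ) :
    (∑ j ∈ range n, cos (j * t)) ^ 2 + (∑ j ∈ range n, sin (j * t)) ^ 2
      = ∑ j ∈ range n, ∑ k ∈ range n, cos ((j - k : ℤ) * t) := by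
  simp only [sq, sum_mul_sum, ← sum_add_distrib]
  refine sum_congr rfl fun j _ => sum_congr rfl fun k _ => ?_
  push_cast
  rw [sub_mul, cos_sub]

-- `(F_n(φ - θ) + F_n(φ + θ)) / 2` for the Fejér kernel `F_n(t) = |∑_{j ≤ n} e^{ijt}|² / (n + 1)`.
noncomputable def fejerKernel (n : ℕ) (θ φ : ℝ) : ℝ :=
  (∑ j ∈ range (n + 1), ∑ k ∈ range (n + 1), cos ((j - k : ℤ) * θ) * cos ((j - k : ℤ) * φ))
    / (n + 1)

theorem fejerKernel_nonneg (n : ℕ) (θ φ : ℝ) : 0 ≤ fejerKernel n θ φ := by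
  have h : ∑ j ∈ range (n + 1), ∑ k ∈ range (n + 1), cos ((j - k : ℤ) * θ) * cos ((j - k : ℤ) * φ)
      = ((∑ j ∈ range (n + 1), ∑ k ∈ range (n + 1), cos ((j - k : ℤ) * (φ - θ)))
        + ∑ j ∈ range (n + 1), ∑ k ∈ range (n + 1), cos ((j - k : ℤ) * (φ + θ))) / 2 := by
    simp only [← sum_add_distrib, sum_div]
    refine sum_congr rfl fun j _ => sum_congr rfl fun k _ => ?_
    rw [mul_sub, mul_add, cos_sub, cos_add]
    ring
  unfold fejerKernel
  rw [h, ← sq_sum_cos_add_sq_sum_sin, ← sq_sum_cos_add_sq_sum_sin]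
  positivity

theorem sum_sum_ite_sub_eq (n l : ℕ) (hl : l ≤ n) :
    ∑ j ∈ range (n + 1), ∑ k ∈ range (n + 1), (if (j - k : ℤ) = l then (1 : ℝ) else 0)
      = n + 1 - l := by
  rw [sum_comm]
  have inner (k : ℕ) : ∑ j ∈ range (n + 1), (if (j - k : ℤ) = l then (1 : ℝ) else 0)
      = if k + l ∈ range (n + 1) then 1 else 0 := by
    simp_rw [show ∀ j : ℕ, (j - k : ℤ) = l ↔ j = k + l from fun j => by omega]
    exact sum_ite_eq' _ _ _
  have hfilter : {k ∈ range (n + 1) | k + l ∈ range (n + 1)} = range (n + 1 - l) := by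
    ext k
    simp only [mem_filter, mem_range]
    omega
  rw [sum_congr rfl fun k _ => inner k, sum_boole, hfilter, card_range, Nat.cast_sub (by omega)]
  push_cast
  ring

theorem sum_sum_ite_sub_eq_neg (n l : ℕ) (hl : l ≤ n) :
    ∑ j ∈ range (n + 1), ∑ k ∈ range (n + 1), (if (j - k : ℤ) = -l then (1 : ℝ) else 0)
      = n + 1 - l := by
  rw [sum_comm, ← sum_sum_ite_sub_eq n l hl]
  exact sum_congr rfl fun j _ => sum_congr rfl fun k _ => if_congr (by omega) rfl rfl

theorem sum_cos_mul_fejerKernel {N n l : ℕ} (hl : l ≤ n) (h : l + n < 2 * N) (θ : ℝ) :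
    ∑ κ ∈ range N, cos (l * chebAngle N κ) * fejerKernel n θ (chebAngle N κ)
      = N * (1 - l / (n + 1)) * cos (l * θ) := by
  have hterm {j k : ℕ} (hj : j ∈ range (n + 1)) (hk : k ∈ range (n + 1)) :
      ∑ κ ∈ range N,
          cos ((j - k : ℤ) * θ) * (cos (l * chebAngle N κ) * cos ((j - k : ℤ) * chebAngle N κ))
        = N / 2 * cos (l * θ) *
          ((if (j - k : ℤ) = l then 1 else 0) + (if (j - k : ℤ) = -l then 1 else 0)) := by
    rw [mem_range] at hj hk
    rw [← mul_sum, sum_cos_mul_cos_chebAngle (by omega)]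
    split_ifs with h₁ h₂ h₂ <;>
      simp only [h₁, h₂, Int.cast_neg, Int.cast_natCast, neg_mul, cos_neg, add_zero, zero_add,
        mul_one, mul_zero] <;> ring
  calc _ = (∑ j ∈ range (n + 1), ∑ k ∈ range (n + 1), ∑ κ ∈ range N,
          cos ((j - k : ℤ) * θ) * (cos (l * chebAngle N κ) * cos ((j - k : ℤ) * chebAngle N κ)))
          / (n + 1) := by
        simp_rw [fejerKernel, mul_div_assoc', ← sum_div, mul_sum]
        rw [sum_comm]
        refine congrArg (· / _) (sum_congr rfl fun j _ => ?_)
        rw [sum_comm]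
        exact sum_congr rfl fun k _ => sum_congr rfl fun κ _ => by ring
    _ = N / 2 * cos (l * θ) * (2 * (n + 1 - l)) / (n + 1) := by
        simp_rw [sum_congr rfl fun j hj => sum_congr rfl fun k hk => hterm hj hk, ← mul_sum,
          sum_add_distrib, sum_sum_ite_sub_eq n l hl, sum_sum_ite_sub_eq_neg n l hl]
        ring
    _ = N * (1 - l / (n + 1)) * cos (l * θ) := by
        field_simp

theorem sum_fejerKernel {N n : ℕ} (h : n < 2 * N) (θ : ℝ) :
    ∑ κ ∈ range N, fejerKernel n θ (chebAngle N κ) = N := by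
  simpa using sum_cos_mul_fejerKernel (l := 0) (Nat.zero_le n) (by omega) θ

noncomputable def vallePoussinKernel (m : ℕ) (θ φ : ℝ) : ℝ :=
  2 * fejerKernel (2 * m + 1) θ φ - fejerKernel m θ φ

theorem sum_cos_mul_vallePoussinKernel {N m l : ℕ} (hl : l ≤ m) (h : 3 * m + 1 < 2 * N) (θ : ℝ) :
    ∑ κ ∈ range N, cos (l * chebAngle N κ) * vallePoussinKernel m θ (chebAngle N κ)
      = N * cos (l * θ) := by
  simp only [vallePoussinKernel, mul_sub, mul_left_comm _ (2 : ℝ), sum_sub_distrib, ← mul_sum]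
  rw [sum_cos_mul_fejerKernel (by omega) (by omega), sum_cos_mul_fejerKernel hl (by omega)]
  push_cast
  field_simp
  ring

theorem sum_abs_vallePoussinKernel_le {N m : ℕ} (h : 2 * m + 1 < 2 * N) (θ : ℝ) :
    ∑ κ ∈ range N, |vallePoussinKernel m θ (chebAngle N κ)| ≤ 3 * N := by
  have hle (φ : ℝ) :
      |vallePoussinKernel m θ φ| ≤ 2 * fejerKernel (2 * m + 1) θ φ + fejerKernel m θ φ := by
    have := fejerKernel_nonneg (2 * m + 1) θ φ
    have := fejerKernel_nonneg m θ φ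
    rw [vallePoussinKernel, abs_le]
    constructor <;> linarith
  calc _ ≤ ∑ κ ∈ range N,
          (2 * fejerKernel (2 * m + 1) θ (chebAngle N κ) + fejerKernel m θ (chebAngle N κ)) :=
        sum_le_sum fun κ _ => hle _
    _ = 3 * N := by
        rw [sum_add_distrib, ← mul_sum, sum_fejerKernel h, sum_fejerKernel (by omega)]
        ring

theorem abs_sum_mul_cos_le_of_chebAngle {N m : ℕ} (h : 3 * m + 1 < 2 * N) (a : ℕ → ℝ) {B : ℝ}
    (hB : ∀ κ < N, |∑ l ∈ range (m + 1), a l * cos (l * chebAngle N κ)| ≤ B) (θ : ℝ) :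
    |∑ l ∈ range (m + 1), a l * cos (l * θ)| ≤ 3 * B := by
  set q : ℝ → ℝ := fun t => ∑ l ∈ range (m + 1), a l * cos (l * t)
  have hN : (0 : ℝ) < N := by norm_cast; omega
  have hrepr :
      N * q θ = ∑ κ ∈ range N, q (chebAngle N κ) * vallePoussinKernel m θ (chebAngle N κ) := by
    simp only [q, sum_mul, mul_sum]
    rw [sum_comm]
    refine sum_congr rfl fun l hl => ?_
    simp only [mul_assoc, ← mul_sum]
    rw [sum_cos_mul_vallePoussinKernel (by simpa [Nat.lt_succ_iff] using hl) h]
    ring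
  have hbound : N * |q θ| ≤ N * (3 * B) := calc
    N * |q θ| = |∑ κ ∈ range N, q (chebAngle N κ) * vallePoussinKernel m θ (chebAngle N κ)| := by
      rw [← hrepr, abs_mul, abs_of_pos hN]
    _ ≤ ∑ κ ∈ range N, B * |vallePoussinKernel m θ (chebAngle N κ)| := by
      refine (abs_sum_le_sum_abs _ _).trans (sum_le_sum fun κ hκ => ?_)
      rw [abs_mul]
      exact mul_le_mul_of_nonneg_right (hB κ (mem_range.1 hκ)) (abs_nonneg _)
    _ ≤ B * (3 * N) := by
      rw [← mul_sum]
      exact mul_le_mul_of_nonneg_left (sum_abs_vallePoussinKernel_le (by omega) θ)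
        ((abs_nonneg _).trans (hB 0 (by omega)))
    _ = N * (3 * B) := by ring
  exact le_of_mul_le_mul_left hbound hN

theorem exists_eval_cos_eq_sum_mul_cos {m : ℕ} {p : ℝ[X]} (hp : p.natDegree ≤ m) :
    ∃ a : ℕ → ℝ, ∀ θ, p.eval (cos θ) = ∑ l ∈ range (m + 1), a l * cos (l * θ) := by
  induction m generalizing p with
  | zero =>
    refine ⟨fun _ => p.coeff 0, fun θ => ?_⟩
    rw [eq_C_of_natDegree_eq_zero (Nat.le_zero.1 hp)]
    simp
  | succ m ih =>
    set c := p.coeff (m + 1) / 2 ^ m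
    have hT : (Chebyshev.T ℝ (m + 1 : ℕ)).natDegree = m + 1 := by
      rw [Chebyshev.natDegree_T, Int.natAbs_natCast]
    have hTlead : (Chebyshev.T ℝ (m + 1 : ℕ)).coeff (m + 1) = 2 ^ m := by
      have := Chebyshev.leadingCoeff_T ℝ (m + 1 : ℕ)
      rwa [leadingCoeff, hT, Int.natAbs_natCast, Nat.add_sub_cancel] at this
    have hq : (p - C c * Chebyshev.T ℝ (m + 1 : ℕ)).natDegree ≤ m := by
      rw [natDegree_le_iff_coeff_eq_zero]
      intro k hk
      rw [coeff_sub, coeff_C_mul]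
      rcases (Nat.succ_le_of_lt hk).eq_or_lt with rfl | hk'
      · rw [Nat.succ_eq_add_one, hTlead, div_mul_cancel₀ _ (by positivity), sub_self]
      · rw [coeff_eq_zero_of_natDegree_lt (hp.trans_lt hk'),
          coeff_eq_zero_of_natDegree_lt (hT.trans_lt hk'), mul_zero, sub_zero]
    obtain ⟨a, ha⟩ := ih hq
    refine ⟨Function.update a (m + 1) c, fun θ => ?_⟩
    have hθ := ha θ
    rw [eval_sub, eval_mul, eval_C, Chebyshev.T_real_cos] at hθ
    rw [sum_range_succ, Function.update_self, sum_congr rfl fun l hl =>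
      by rw [Function.update_of_ne (mem_range.1 hl).ne], ← hθ]
    push_cast
    ring

/-- Oversampling at Chebyshev nodes: there are constants `C₀ ≥ 1` and `c ≥ 1` such that
whenever `N ≥ C₀ · M`, every polynomial of degree at most `M - 1` satisfies
`‖p‖_{∞,[-1,1]} ≤ c · max_k |p(x_k)|` at the `N` Chebyshev nodes
`x_k = cos((2k-1)π/(2N))`; the stability constant is independent of `M`. -/
theorem chebyshev_oversampling_uniform_stability :
    ∃ (C₀ : ℝ) (hC₀ : 1 ≤ C₀) (c : ℝ) (hc : 1 ≤ c),
      ∀ (M : ℕ) (hM : 1 ≤ M) (N : ℕ) (hN : C₀ * (M : ℝ) ≤ (N : ℝ)),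
        ∀ p : Polynomial ℝ, p.natDegree ≤ M - 1 →
          ∀ x ∈ Set.Icc (-1 : ℝ) 1,
            |p.eval x| ≤ c *
              Finset.univ.sup'
                ⟨⟨0, by
                    have h1 : (1 : ℝ) ≤ (M : ℝ) := by exact_mod_cast hM
                    have h2 : (0 : ℝ) < (N : ℝ) := by nlinarith
                    exact_mod_cast h2⟩, Finset.mem_univ _⟩
                (fun k : Fin N =>
                  |p.eval (Real.cos ((2 * (k : ℝ) + 1) * π / (2 * N)))|) := by
  refine ⟨3 / 2, by norm_num, 3, by norm_num, fun M hM N hN p hp x hx => ?_⟩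
  have hMN : 3 * M ≤ 2 * N := by exact_mod_cast (by linarith : (3 * M : ℝ) ≤ 2 * N)
  obtain ⟨a, ha⟩ := exists_eval_cos_eq_sum_mul_cos hp
  rw [← cos_arccos hx.1 hx.2, ha]
  refine abs_sum_mul_cos_le_of_chebAngle (N := N) (by omega) a (fun κ hκ => ?_) _
  rw [← ha]
  have hle := le_sup' (fun k : Fin N => |p.eval (cos (chebAngle N k))|) (mem_univ ⟨κ, hκ⟩)
  exact hle
end

section
/- There exist constants C₀ ≥ 1 and c ≥ 1 such that for all natural numbers M ≥ 1 and N ≥ 2 with N ≥ C₀ · M², every real polynomial p of degree at most M − 1 satisfies sup_{x ∈ [−1,1]} |p(x)| ≤ c · max_{1 ≤ j ≤ N} |p(x_j)|, where x_j = −1 + 2(j − 1)/(N − 1), j = 1, …, N, are the N equidistant points in [−1, 1]. -/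
/-!
For `p` of degree at most `n` with `|p| ≤ A` on `[-1, 1]`, the polynomial `w ^ n p((w + w⁻¹) / 2)`
has modulus at most `A` on the unit circle, hence on the unit disk. The Joukowski map
`w ↦ (w + w⁻¹) / 2` sends the circle `‖w‖ = s` onto the ellipse with foci `±1` and focal sum
`s + s⁻¹`, so every point within `1 / (8 n²)` of `[-1, 1]` is the image of some `w` with
`‖w‖ ≥ 1 - 1 / (2 n)`, and there `|p| ≤ 2 A`. Cauchy's estimate on circles of radius `1 / (8 n²)`
gives the Markov-type bound `|p'| ≤ 16 n² A` on `[-1, 1]`. Hence a node within `1 / (32 n²)` of a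
maximiser of `|p|` carries at least half the maximum, and equidistant nodes with spacing
`2 / (N - 1) ≤ 1 / (32 M²)` have this property.
-/

open Polynomial Set Metric

namespace Polynomial

noncomputable def joukowskiPoly {K : Type*} [Field K] (P : K[X]) (n : ℕ) : K[X] :=
  ∑ k ∈ Finset.range (n + 1), C (P.coeff k / 2 ^ k) * (X ^ 2 + 1) ^ k * X ^ (n - k)

theorem eval_joukowskiPoly {K : Type*} [Field K] {P : K[X]} {n : ℕ} (hP : P.natDegree ≤ n)
    {w : K} (hw : w ≠ 0) :
    (joukowskiPoly P n).eval w = w ^ n * P.eval ((w ^ 2 + 1) / (2 * w)) := by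
  rw [eval_eq_sum_range' (Nat.lt_succ_of_le hP), joukowskiPoly, eval_finsetSum, Finset.mul_sum]
  refine Finset.sum_congr rfl fun k hk => ?_
  have hwk : w ^ (n - k) * w ^ k = w ^ n :=
    pow_sub_mul_pow w (Nat.lt_succ_iff.mp (Finset.mem_range.mp hk))
  simp only [eval_mul, eval_C, eval_pow, eval_add, eval_one, eval_X]
  rw [← hwk, div_pow, mul_pow]
  field_simp

end Polynomial

namespace Complex

-- `u ^ 2 + 1 = 2 * z * u` is `z = (u + u⁻¹) / 2` written without division.
theorem norm_mul_norm_sub_one_add_norm_add_one {u z : ℂ} (h : u ^ 2 + 1 = 2 * z * u) :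
    ‖u‖ * (‖z - 1‖ + ‖z + 1‖) = ‖u‖ ^ 2 + 1 := by
  have hsub : 2 * ‖u‖ * ‖z - 1‖ = ‖u - 1‖ ^ 2 := by
    rw [← norm_pow, show (u - 1) ^ 2 = 2 * u * (z - 1) by linear_combination h]
    simp
  have hadd : 2 * ‖u‖ * ‖z + 1‖ = ‖u + 1‖ ^ 2 := by
    rw [← norm_pow, show (u + 1) ^ 2 = 2 * u * (z + 1) by linear_combination h]
    simp
  have := parallelogram_law_with_norm ℝ u 1
  rw [norm_one] at this
  nlinarith

theorem exists_norm_le_one_sq_add_one_eq (z : ℂ) : ∃ u : ℂ, ‖u‖ ≤ 1 ∧ u ^ 2 + 1 = 2 * z * u := by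
  obtain ⟨w, hw⟩ := IsAlgClosed.exists_pow_nat_eq (z ^ 2 - 1) two_pos
  have hprod : ‖z - w‖ * ‖z + w‖ = 1 := by
    rw [← norm_mul, show (z - w) * (z + w) = 1 by linear_combination -hw, norm_one]
  rcases le_total ‖z - w‖ 1 with h | h
  · exact ⟨z - w, h, by linear_combination hw⟩
  · exact ⟨z + w, by nlinarith [norm_nonneg (z + w)], by linear_combination hw⟩

theorem sq_add_one_eq_two_mul_re_mul {u : ℂ} (hu : ‖u‖ = 1) : u ^ 2 + 1 = 2 * u.re * u := by
  have hconj : u * (starRingEnd ℂ) u = 1 := by rw [mul_conj, normSq_eq_norm_sq, hu]; simp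
  have hre : (2 * u.re : ℂ) = u + (starRingEnd ℂ) u := by rw [add_conj]; push_cast; ring
  rw [hre]
  linear_combination -hconj

end Complex

namespace Polynomial

theorem norm_aeval_ofReal (p : ℝ[X]) (x : ℝ) : ‖aeval (x : ℂ) p‖ = |p.eval x| := by
  rw [show aeval (x : ℂ) p = ((p.eval x : ℝ) : ℂ) from (ofReal_eval p x).symm, Complex.norm_real,
    Real.norm_eq_abs]

variable {p : ℝ[X]} {n : ℕ} {A : ℝ}

theorem norm_pow_mul_norm_aeval_le (hp : p.natDegree ≤ n)
    (hA : ∀ x ∈ Icc (-1 : ℝ) 1, |p.eval x| ≤ A) {u z : ℂ} (hu : ‖u‖ ≤ 1)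
    (h : u ^ 2 + 1 = 2 * z * u) : ‖u‖ ^ n * ‖aeval z p‖ ≤ A := by
  set Q := joukowskiPoly (p.map (algebraMap ℝ ℂ)) n
  have hP : (p.map (algebraMap ℝ ℂ)).natDegree ≤ n := natDegree_map_le.trans hp
  have hQ : ∀ {w z : ℂ}, w ^ 2 + 1 = 2 * z * w → Q.eval w = w ^ n * aeval z p := by
    intro w z h
    have hw : w ≠ 0 := by rintro rfl; norm_num at h
    rw [eval_joukowskiPoly hP hw, eval_map_algebraMap,
      show (w ^ 2 + 1) / (2 * w) = z by field_simp; linear_combination h]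
  have hsphere : ∀ w ∈ frontier (ball (0 : ℂ) 1), ‖Q.eval w‖ ≤ A := by
    intro w hw
    rw [frontier_ball 0 one_ne_zero, mem_sphere_zero_iff_norm] at hw
    rw [hQ (Complex.sq_add_one_eq_two_mul_re_mul hw), norm_mul, norm_pow, hw, one_pow, one_mul,
      norm_aeval_ofReal]
    exact hA _ (abs_le.mp ((Complex.abs_re_le_norm w).trans hw.le))
  have := Complex.norm_le_of_forall_mem_frontier_norm_le isBounded_ball
    Q.differentiable.diffContOnCl hsphere (z := u)
    (by rwa [closure_ball 0 one_ne_zero, mem_closedBall_zero_iff])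
  rwa [hQ h, norm_mul, norm_pow] at this

theorem norm_aeval_le_two_mul_of_norm_sub_le (hp : p.natDegree ≤ n)
    (hA : ∀ x ∈ Icc (-1 : ℝ) 1, |p.eval x| ≤ A) {x : ℝ} (hx : x ∈ Icc (-1 : ℝ) 1) {z : ℂ}
    (hz : ‖z - x‖ ≤ 1 / (8 * n ^ 2)) : ‖aeval z p‖ ≤ 2 * A := by
  obtain ⟨u, hu, h⟩ := Complex.exists_norm_le_one_sq_add_one_eq z
  have hfocal : ‖z - 1‖ + ‖z + 1‖ ≤ 2 + 1 / (4 * n ^ 2) := by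
    have h1 := norm_sub_le_norm_sub_add_norm_sub z x 1
    have h2 := norm_sub_le_norm_sub_add_norm_sub z x (-1)
    rw [show (x : ℂ) - 1 = ((x - 1 : ℝ) : ℂ) by push_cast; ring, Complex.norm_real,
      Real.norm_eq_abs, abs_of_nonpos (by linarith [hx.2])] at h1
    rw [show (x : ℂ) - -1 = ((x + 1 : ℝ) : ℂ) by push_cast; ring, Complex.norm_real,
      Real.norm_eq_abs, abs_of_nonneg (by linarith [hx.1]), sub_neg_eq_add] at h2
    have : 1 / (4 * (n : ℝ) ^ 2) = 2 * (1 / (8 * n ^ 2)) := by ring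
    linarith
  have hs := Complex.norm_mul_norm_sub_one_add_norm_add_one h
  set s := ‖u‖
  have h1s : (1 - s) ^ 2 ≤ 1 / (4 * n ^ 2) := by
    have : 0 ≤ 1 / (4 * (n : ℝ) ^ 2) := by positivity
    nlinarith [norm_nonneg u]
  have hns : n * (1 - s) ≤ 1 / 2 := by
    have : (n : ℝ) ^ 2 * (1 / (4 * n ^ 2)) ≤ 1 / 4 :=
      calc (n : ℝ) ^ 2 * (1 / (4 * n ^ 2)) = (n ^ 2 / n ^ 2) / 4 := by ring
        _ ≤ 1 / 4 := by gcongr; exact div_self_le_one _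
    nlinarith
  have hpow : 1 / 2 ≤ s ^ n := by
    have := one_add_mul_le_pow (a := -(1 - s)) (by linarith [norm_nonneg u]) n
    rw [show 1 + -(1 - s) = s by ring] at this
    linarith
  have := norm_pow_mul_norm_aeval_le hp hA hu h
  nlinarith [norm_nonneg (aeval z p)]

theorem abs_eval_derivative_le (hp : p.natDegree ≤ n)
    (hA : ∀ x ∈ Icc (-1 : ℝ) 1, |p.eval x| ≤ A) {x : ℝ} (hx : x ∈ Icc (-1 : ℝ) 1) :
    |p.derivative.eval x| ≤ 16 * n ^ 2 * A := by
  rcases eq_or_ne n 0 with rfl | hn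
  · rw [eq_C_of_natDegree_le_zero hp]
    simp
  have hd : (0 : ℝ) < 1 / (8 * n ^ 2) := by positivity
  have := Complex.norm_deriv_le_of_forall_mem_sphere_norm_le hd
    (Polynomial.differentiable_aeval p).diffContOnCl (C := 2 * A) fun z hz =>
      norm_aeval_le_two_mul_of_norm_sub_le hp hA hx (mem_sphere_iff_norm.mp hz).le
  rw [Polynomial.deriv_aeval, norm_aeval_ofReal] at this
  convert this using 1
  field_simp
  ring

theorem abs_eval_le_two_mul_of_forall_exists_near (hp : p.natDegree ≤ n) {B : ℝ}
    (hnear : ∀ x ∈ Icc (-1 : ℝ) 1,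
      ∃ y ∈ Icc (-1 : ℝ) 1, 32 * n ^ 2 * |x - y| ≤ 1 ∧ |p.eval y| ≤ B)
    {x : ℝ} (hx : x ∈ Icc (-1 : ℝ) 1) : |p.eval x| ≤ 2 * B := by
  obtain ⟨x₀, hx₀, hmax⟩ := isCompact_Icc.exists_isMaxOn (nonempty_Icc.mpr (by norm_num))
    (p.continuous.abs.continuousOn (s := Icc (-1 : ℝ) 1))
  set A := |p.eval x₀|
  have hA : ∀ x ∈ Icc (-1 : ℝ) 1, |p.eval x| ≤ A := fun x hx => hmax hx
  obtain ⟨y, hy, hxy, hyB⟩ := hnear x₀ hx₀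
  have hmvt : |p.eval x₀ - p.eval y| ≤ 16 * n ^ 2 * A * |x₀ - y| :=
    (convex_Icc _ _).norm_image_sub_le_of_norm_deriv_le (f := fun t => p.eval t)
      (fun _ _ => p.differentiableAt)
      (fun t ht => by rw [Polynomial.deriv]; exact abs_eval_derivative_le hp hA ht) hy hx₀
  have : 16 * n ^ 2 * A * |x₀ - y| ≤ A / 2 := by nlinarith [abs_nonneg (p.eval x₀)]
  have := abs_sub_abs_le_abs_sub (p.eval x₀) (p.eval y)
  linarith [hA x hx]

end Polynomial

noncomputable def equidistantNode (N j : ℕ) : ℝ := -1 + 2 * j / (N - 1)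

theorem equidistantNode_mem_Icc {N j : ℕ} (hj : j < N) :
    equidistantNode N j ∈ Icc (-1 : ℝ) 1 := by
  have hjN : (j : ℝ) ≤ N - 1 := by
    rw [le_sub_iff_add_le]; exact_mod_cast hj
  have h0 : 0 ≤ 2 * (j : ℝ) / (N - 1) :=
    div_nonneg (by positivity) ((Nat.cast_nonneg j).trans hjN)
  have h2 : 2 * (j : ℝ) / (N - 1) ≤ 2 :=
    div_le_of_le_mul₀ ((Nat.cast_nonneg j).trans hjN) zero_le_two (by linarith)
  constructor <;> unfold equidistantNode <;> linarith

theorem exists_abs_sub_equidistantNode_le {N : ℕ} (hN : 2 ≤ N) {x : ℝ}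
    (hx : x ∈ Icc (-1 : ℝ) 1) :
    ∃ j < N, |x - equidistantNode N j| ≤ 2 / (N - 1) := by
  have hN1 : (0 : ℝ) < N - 1 := by
    rw [sub_pos]; exact_mod_cast hN
  set t := (x + 1) * (N - 1) / 2
  have ht0 : 0 ≤ t := div_nonneg (mul_nonneg (by linarith [hx.1]) hN1.le) zero_le_two
  have htN : t < N := by
    have := mul_le_mul_of_nonneg_right (by linarith [hx.2] : x + 1 ≤ 2) hN1.le
    show (x + 1) * (N - 1) / 2 < N
    linarith
  refine ⟨⌊t⌋₊, by exact_mod_cast (Nat.floor_le ht0).trans_lt htN, ?_⟩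
  have hx_eq : x - equidistantNode N ⌊t⌋₊ = 2 * (t - ⌊t⌋₊) / (N - 1) := by
    unfold equidistantNode t; field_simp; ring
  rw [hx_eq, abs_of_nonneg (by have := Nat.floor_le ht0; positivity),
    div_le_div_iff_of_pos_right hN1]
  linarith [Nat.lt_floor_add_one t]

/-- Oversampling at equidistant nodes (Ehlich–Zeller type): there are constants
`C₀ ≥ 1` and `c ≥ 1` such that whenever `N ≥ 2` and `N ≥ C₀ · M²`, every polynomial of
degree at most `M - 1` satisfies `‖p‖_{∞,[-1,1]} ≤ c · max_j |p(x_j)|` at the `N`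
equidistant nodes `x_j = -1 + 2(j-1)/(N-1)`; the stability constant is
independent of `M`. -/
theorem equidistant_oversampling_uniform_stability :
    ∃ (C₀ : ℝ) (hC₀ : 1 ≤ C₀) (c : ℝ) (hc : 1 ≤ c),
      ∀ (M : ℕ) (hM : 1 ≤ M) (N : ℕ) (hN2 : 2 ≤ N)
        (hN : C₀ * (M : ℝ) ^ 2 ≤ (N : ℝ)),
        ∀ p : Polynomial ℝ, p.natDegree ≤ M - 1 →
          ∀ x ∈ Set.Icc (-1 : ℝ) 1,
            |p.eval x| ≤ c *
              Finset.univ.sup' ⟨⟨0, by omega⟩, Finset.mem_univ _⟩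
                (fun j : Fin N =>
                  |p.eval (-1 + 2 * (j : ℝ) / ((N : ℝ) - 1))|) := by
  refine ⟨65, by norm_num, 2, by norm_num, fun M hM N hN2 hN p hp x hx => ?_⟩
  have hspacing : 32 * (M : ℝ) ^ 2 * (2 / (N - 1)) ≤ 1 := by
    have : (1 : ℝ) ≤ M ^ 2 := by exact_mod_cast Nat.one_le_pow 2 M hM
    rw [mul_div_assoc', div_le_one (by linarith)]
    linarith
  refine p.abs_eval_le_two_mul_of_forall_exists_near (hp.trans (Nat.sub_le M 1))
    (fun y hy => ?_) hx
  obtain ⟨j, hj, hyj⟩ := exists_abs_sub_equidistantNode_le hN2 hy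
  refine ⟨_, equidistantNode_mem_Icc hj,
    (mul_le_mul_of_nonneg_left hyj (by positivity)).trans hspacing, ?_⟩
  exact Finset.le_sup' (f := fun i : Fin N => |p.eval (equidistantNode N i)|)
    (Finset.mem_univ ⟨j, hj⟩)
end

section
/- Let U be a real vector space, F₁ and F₂ real normed vector spaces, L : U → F₁ and B : U → F₂ linear maps, p a seminorm on U, and C ≥ 0 a constant such that p(u) ≤ ‖B(u)‖ + C · ‖L(u)‖ for all u ∈ U (well-posedness). Let u* ∈ U with L(u*) = f_L and B(u*) = f_B. Suppose u_MPS ∈ U satisfies ‖f_L − L(u_MPS)‖ ≤ ε₁, and suppose ũ ∈ U satisfies L(ũ) = 0 and ‖(f_B − B(u_MPS)) − B(ũ)‖ ≤ ε₂. Then p(u* − ũ − u_MPS) ≤ ε₂ + C · ε₁. -/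
/-- Error bound for the two-step Dual Reciprocity Method (Section 8): an MPS step
`u_MPS` with residual `ε₁` in the differential equation, followed by a Trefftz/MFS step
`ũ` solving the homogeneous equation and matching the corrected boundary data within
`ε₂`, gives a combined error at most `ε₂ + C·ε₁` in the well-posedness seminorm. -/
theorem dual_reciprocity_error_bound
    {U F₁ F₂ : Type*} [AddCommGroup U] [Module ℝ U]
    [NormedAddCommGroup F₁] [NormedSpace ℝ F₁]
    [NormedAddCommGroup F₂] [NormedSpace ℝ F₂]
    (L : U →ₗ[ℝ] F₁) (B : U →ₗ[ℝ] F₂) (p : Seminorm ℝ U)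
    (C : ℝ) (hC : 0 ≤ C)
    (hwp : ∀ u : U, p u ≤ ‖B u‖ + C * ‖L u‖)
    (ustar : U) (fL : F₁) (fB : F₂) (hL : L ustar = fL) (hB : B ustar = fB)
    (uMPS : U) (ε₁ : ℝ) (hMPS : ‖fL - L uMPS‖ ≤ ε₁)
    (utilde : U) (ε₂ : ℝ) (hhom : L utilde = 0)
    (hT : ‖(fB - B uMPS) - B utilde‖ ≤ ε₂) :
    p (ustar - utilde - uMPS) ≤ ε₂ + C * ε₁ := by
  have h1 : L (ustar - utilde - uMPS) = fL - L uMPS := by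
    simp [map_sub, hL, hhom]
  have h2 : B (ustar - utilde - uMPS) = (fB - B uMPS) - B utilde := by
    simp [map_sub, hB]; abel
  calc p (ustar - utilde - uMPS) ≤ ‖B (ustar - utilde - uMPS)‖ + C * ‖L (ustar - utilde - uMPS)‖ := hwp _
    _ ≤ ε₂ + C * ε₁ := by
        rw [h1, h2]; gcongr
end

section
/- Let K be a nonempty compact topological space, Γ ⊆ K a nonempty closed subset, and U_r a finite-dimensional linear subspace of C(K, ℝ) such that every u ∈ U_r satisfies sup_{x ∈ K} |u(x)| ≤ sup_{y ∈ Γ} |u(y)| (maximum principle). Then there exists a finite set X ⊆ Γ with the following property: for every w ∈ C(K, ℝ) such that sup_{x ∈ K} |w(x) − u(x)| ≤ sup_{y ∈ Γ} |w(y) − u(y)| for all u ∈ U_r, and for every g ∈ U_r satisfying max_{y ∈ X} |w(y) − g(y)| ≤ inf_{h ∈ U_r} max_{y ∈ X} |w(y) − h(y)| + inf_{h ∈ U_r} sup_{y ∈ Γ} |w(y) − h(y)|, one has sup_{x ∈ K} |w(x) − g(x)| ≤ 5 · inf_{h ∈ U_r} sup_{y ∈ Γ} |w(y) − h(y)|.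 -/
section Aux

variable {K : Type*} [TopologicalSpace K] [CompactSpace K] [Nonempty K]

private lemma sup_abs_bddAbove (Γ : Set K) (f : C(K, ℝ)) :
    BddAbove (Set.range fun y : Γ => |f (y : K)|) := by
  refine ⟨‖f‖, ?_⟩
  rintro _ ⟨y, rfl⟩
  simpa [Real.norm_eq_abs] using f.norm_coe_le_norm (y : K)

private lemma sup_abs_le_norm (Γ : Set K) (hΓne : Γ.Nonempty) (f : C(K, ℝ)) :
    (⨆ y : Γ, |f (y : K)|) ≤ ‖f‖ := by
  have : Nonempty Γ := hΓne.to_subtype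
  refine ciSup_le fun y => ?_
  simpa [Real.norm_eq_abs] using f.norm_coe_le_norm (y : K)

private lemma abs_le_sup_abs (Γ : Set K) (f : C(K, ℝ)) {y : K} (hy : y ∈ Γ) :
    |f y| ≤ ⨆ z : Γ, |f (z : K)| :=
  le_ciSup (sup_abs_bddAbove Γ f) (⟨y, hy⟩ : Γ)

/-- Existence of a finite norming set with constant `4/3`. -/
private lemma exists_norming_set (Γ : Set K) (hΓcl : IsClosed Γ) (hΓne : Γ.Nonempty)
    (Ur : Submodule ℝ C(K, ℝ)) [FiniteDimensional ℝ Ur]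
    (hmax : ∀ u ∈ Ur, ‖u‖ ≤ ⨆ y : Γ, |u (y : K)|) :
    ∃ (X : Finset K) (hX : X.Nonempty), ↑X ⊆ Γ ∧
      ∀ u ∈ Ur, ‖u‖ ≤ (4 / 3) * X.sup' hX (fun y => |u y|) := by
  have : Nonempty Γ := hΓne.to_subtype
  -- open cover of the unit sphere of `Ur`
  have hcov : Metric.sphere (0 : Ur) 1 ⊆
      ⋃ y ∈ Γ, {v : Ur | 3 / 4 < |(v : C(K, ℝ)) y|} := by
    intro v hv
    have hv1 : ‖v‖ = 1 := by simpa using mem_sphere_zero_iff_norm.mp hv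
    have h1 : (3 / 4 : ℝ) < ⨆ y : Γ, |(v : C(K, ℝ)) (y : K)| := by
      have := hmax (v : C(K, ℝ)) v.2
      have hnv : ‖(v : C(K, ℝ))‖ = 1 := hv1
      linarith [hnv ▸ this]
    obtain ⟨y, hy⟩ := exists_lt_of_lt_ciSup h1
    exact Set.mem_biUnion y.2 hy
  obtain ⟨t, htΓ, htfin, htcov⟩ :=
    (isCompact_sphere (0 : Ur) 1).elim_finite_subcover_image
      (fun y _ => (isOpen_lt continuous_const
        (((ContinuousEvalConst.continuous_eval_const y).comp continuous_subtype_val).abs)))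
      hcov
  obtain ⟨y₀, hy₀⟩ := hΓne
  haveI : DecidableEq K := Classical.decEq K
  refine ⟨insert y₀ htfin.toFinset, ⟨y₀, Finset.mem_insert_self _ _⟩, ?_, ?_⟩
  · intro y hy
    rcases Finset.mem_insert.mp hy with rfl | hy
    · exact hy₀
    · exact htΓ (htfin.mem_toFinset.mp hy)
  · intro u hu
    set X : Finset K := insert y₀ htfin.toFinset with hXdef
    have hXne : X.Nonempty := ⟨y₀, Finset.mem_insert_self _ _⟩
    by_cases hu0 : u = 0
    · subst hu0
      have : X.sup' hXne (fun y => |(0 : C(K, ℝ)) y|) = 0 := by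
        apply le_antisymm
        · exact Finset.sup'_le _ _ fun y _ => by simp
        · obtain ⟨y, hy⟩ := hXne
          simpa using Finset.le_sup' (fun y => |(0 : C(K, ℝ)) y|) hy
      simp [this]
      exact Finset.le_sup' (fun _ : K => (0 : ℝ)) (Finset.mem_insert_self y₀ _)
    · have hnu : (0 : ℝ) < ‖u‖ := norm_pos_iff.mpr hu0
      set v : Ur := ‖u‖⁻¹ • ⟨u, hu⟩ with hvdef
      have hvs : v ∈ Metric.sphere (0 : Ur) 1 := by
        rw [mem_sphere_zero_iff_norm, hvdef]
        have hc : ‖(‖u‖⁻¹ • (⟨u, hu⟩ : Ur) : Ur)‖ = ‖‖u‖⁻¹ • u‖ := rfl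
        refine Eq.trans hc ?_
        have hns := norm_smul (‖u‖⁻¹) u
        rw [Real.norm_eq_abs, abs_inv, abs_of_pos hnu] at hns
        rw [hns]
        field_simp
      obtain ⟨y, hyt, hvy⟩ := Set.mem_iUnion₂.mp (htcov hvs)
      have hyX : y ∈ X := Finset.mem_insert_of_mem (htfin.mem_toFinset.mpr hyt)
      have hvu : |(v : C(K, ℝ)) y| = ‖u‖⁻¹ * |u y| := by
        simp [hvdef, abs_mul, abs_inv, abs_of_pos hnu]
      have h34 : (3 / 4 : ℝ) < ‖u‖⁻¹ * |u y| := hvu ▸ hvy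
      have huy : (3 / 4 : ℝ) * ‖u‖ ≤ |u y| := by
        rw [inv_mul_eq_div, lt_div_iff₀ hnu] at h34
        linarith
      have hle : |u y| ≤ X.sup' hXne (fun y => |u y|) := Finset.le_sup' (fun y => |u y|) hyX
      linarith
end Aux

/-- Theorem 6 (TheTrefftz) combined with the quasi-optimality argument of Section 4:
for a finite-dimensional Trefftz trial space `Ur ⊆ C(K, ℝ)` satisfying a maximum
principle with respect to the closed boundary part `Γ`, there is a finite set of test
points `X ⊆ Γ` such that for every `w` whose differences with all trial functions also
satisfy the maximum principle, a near-best discrete boundary approximation `g ∈ Ur`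
of `w` on `X` approximates `w` on all of `K` within 5 times the best boundary
approximation error. -/
theorem trefftz_discrete_quasi_optimality
    {K : Type*} [TopologicalSpace K] [CompactSpace K] [Nonempty K]
    (Γ : Set K) (hΓcl : IsClosed Γ) (hΓne : Γ.Nonempty)
    (Ur : Submodule ℝ C(K, ℝ)) [FiniteDimensional ℝ Ur]
    (hmax : ∀ u ∈ Ur, ‖u‖ ≤ ⨆ y : Γ, |u (y : K)|) :
    ∃ (X : Finset K) (hX : X.Nonempty), ↑X ⊆ Γ ∧
      ∀ w : C(K, ℝ),
        (∀ u ∈ Ur, ‖w - u‖ ≤ ⨆ y : Γ, |(w - u) (y : K)|) →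
        ∀ g ∈ Ur,
          X.sup' hX (fun y => |w y - g y|) ≤
              (⨅ h : Ur, X.sup' hX (fun y => |w y - (h : C(K, ℝ)) y|)) +
              (⨅ h : Ur, ⨆ y : Γ, |w (y : K) - (h : C(K, ℝ)) (y : K)|) →
          ‖w - g‖ ≤ 5 * ⨅ h : Ur, ⨆ y : Γ, |w (y : K) - (h : C(K, ℝ)) (y : K)| := by
  have : Nonempty Γ := hΓne.to_subtype
  obtain ⟨X, hX, hXΓ, hnorming⟩ := exists_norming_set Γ hΓcl hΓne Ur hmax
  refine ⟨X, hX, hXΓ, ?_⟩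
  intro w hw g hg hgnear
  set δ : ℝ := ⨅ h : Ur, ⨆ y : Γ, |w (y : K) - (h : C(K, ℝ)) (y : K)| with hδdef
  -- the boundary sup for each `h` as a function
  have hsup_eq : ∀ h : C(K, ℝ), (⨆ y : Γ, |(w - h) (y : K)|)
      = ⨆ y : Γ, |w (y : K) - h (y : K)| := by
    intro h
    refine congrArg _ (funext fun y => ?_)
    simp
  -- ε-argument
  have key : ∀ ε > (0 : ℝ), ‖w - g‖ ≤ 5 * δ + 4 * ε := by
    intro ε hε
    have hδlt : δ < δ + ε := by linarith
    obtain ⟨h, hh⟩ := exists_lt_of_ciInf_lt hδlt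
    -- `‖w - h‖ < δ + ε`
    have hwh : ‖w - (h : C(K, ℝ))‖ < δ + ε := by
      calc ‖w - (h : C(K, ℝ))‖ ≤ ⨆ y : Γ, |(w - (h : C(K, ℝ))) (y : K)| := hw _ h.2
        _ = ⨆ y : Γ, |w (y : K) - (h : C(K, ℝ)) (y : K)| := hsup_eq _
        _ < δ + ε := hh
    -- sup over X of `|w - h|` is `< δ + ε`
    have hXwh : X.sup' hX (fun y => |w y - (h : C(K, ℝ)) y|) < δ + ε := by
      refine lt_of_le_of_lt ?_ hh
      refine Finset.sup'_le _ _ fun y hy => ?_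
      have := abs_le_sup_abs Γ (w - (h : C(K, ℝ))) (hXΓ hy)
      rw [hsup_eq] at this
      simpa using this
    -- discrete best approximation error is `≤ δ + ε`
    have hbdd : BddBelow (Set.range fun h : Ur =>
        X.sup' hX (fun y => |w y - (h : C(K, ℝ)) y|)) := by
      refine ⟨0, ?_⟩
      rintro _ ⟨h', rfl⟩
      obtain ⟨y, hy⟩ := hX
      exact le_trans (abs_nonneg (w y - (h' : C(K, ℝ)) y))
        (Finset.le_sup' (fun y => |w y - (h' : C(K, ℝ)) y|) hy)
    have hinfX : (⨅ h' : Ur, X.sup' hX (fun y => |w y - (h' : C(K, ℝ)) y|)) ≤ δ + ε :=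
      le_trans (ciInf_le hbdd h) hXwh.le
    -- sup over X of `|w - g|` is `≤ 2δ + ε`
    have hXwg : X.sup' hX (fun y => |w y - g y|) ≤ 2 * δ + ε := by
      have := hgnear
      linarith
    -- norming: `‖h - g‖ ≤ (4/3) * sup_X |h - g|`
    have hhg : ‖(h : C(K, ℝ)) - g‖ ≤
        (4 / 3) * X.sup' hX (fun y => |((h : C(K, ℝ)) - g) y|) :=
      hnorming _ (Submodule.sub_mem Ur h.2 hg)
    -- triangle on the finset sup
    have htri : X.sup' hX (fun y => |((h : C(K, ℝ)) - g) y|) ≤ (3 * δ + 2 * ε) := by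
      refine Finset.sup'_le _ _ fun y hy => ?_
      have h1 : |w y - (h : C(K, ℝ)) y| ≤ X.sup' hX (fun y => |w y - (h : C(K, ℝ)) y|) :=
        Finset.le_sup' (fun y => |w y - (h : C(K, ℝ)) y|) hy
      have h2 : |w y - g y| ≤ X.sup' hX (fun y => |w y - g y|) :=
        Finset.le_sup' (fun y => |w y - g y|) hy
      have heq : ((h : C(K, ℝ)) - g) y = (w y - g y) - (w y - (h : C(K, ℝ)) y) := by
        simp
      have h5 : |((h : C(K, ℝ)) - g) y| ≤ |w y - g y| + |w y - (h : C(K, ℝ)) y| := by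
        rw [heq]; exact abs_sub _ _
      linarith [hXwh.le, hXwg]
    have tri : ‖w - g‖ ≤ ‖w - (h : C(K, ℝ))‖ + ‖(h : C(K, ℝ)) - g‖ :=
      norm_sub_le_norm_sub_add_norm_sub w (h : C(K, ℝ)) g
    linarith [tri, hwh.le, hhg, htri]
  -- conclude
  by_contra hcon
  push_neg at hcon
  have hε : (0 : ℝ) < (‖w - g‖ - 5 * δ) / 8 := by linarith
  have := key _ hε
  linarith
end
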